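/- arXiv:1003.3157 — 12 statements merged into one kernel-verified Lean document; each statement's English description precedes it below -/
import Mathlib

section
/- Let A be a square matrix with nonnegative real entries, indexed by a finite nonempty type, and assume A is primitive. Then there exist a real number s > 0 and a vector r with all entries strictly positive such that A·r = s·r. -/
open Finset

private lemma rpf_pow_entry_nonneg {n : Type*} [Fintype n] [DecidableEq n]
    (A : Matrix n n ℝ) (hA : ∀ i j, 0 ≤ A i j) (m : ℕ) : ∀ i j, 0 ≤ (A ^ m) i j := by
  induction m with
  | zero => intro i j; simp only [pow_zero, Matrix.one_apply]; split <;> norm_num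
  | succ m ih =>
    intro i j
    rw [pow_succ, Matrix.mul_apply]
    exact Finset.sum_nonneg fun l _ => mul_nonneg (ih i l) (hA l j)

private lemma rpf_mulVec_pos {n : Type*} [Fintype n] [DecidableEq n]
    (B : Matrix n n ℝ) (hB : ∀ i j, 0 < B i j) (v : n → ℝ) (hv : ∀ j, 0 ≤ v j)
    (j₀ : n) (hj₀ : 0 < v j₀) : ∀ i, 0 < B.mulVec v i := by
  intro i
  simp only [Matrix.mulVec, dotProduct]
  exact Finset.sum_pos' (fun j _ => mul_nonneg (hB i j).le (hv j))
    ⟨j₀, Finset.mem_univ _, mul_pos (hB i j₀) hj₀⟩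

/-- Perron–Frobenius for strictly positive matrices. -/
private lemma rpf_positive_case {n : Type*} [Fintype n] [Nonempty n] [DecidableEq n]
    (B : Matrix n n ℝ) (hB : ∀ i j, 0 < B i j) :
    ∃ (s : ℝ) (r : n → ℝ), 0 < s ∧ (∀ i, 0 < r i) ∧ B.mulVec r = s • r := by
  classical
  set M : ℝ := ∑ i, ∑ j, B i j with hM
  set T : Set (ℝ × (n → ℝ)) :=
    {p | 0 ≤ p.1 ∧ (∀ i, 0 ≤ p.2 i) ∧ (∑ i, p.2 i) = 1 ∧
      ∀ i, p.1 * p.2 i ≤ B.mulVec p.2 i} with hT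
  -- coordinates are at most 1
  have hcoord : ∀ p ∈ T, ∀ i, p.2 i ≤ 1 := by
    rintro p ⟨-, hx, hsum, -⟩ i
    calc p.2 i ≤ ∑ j, p.2 j := Finset.single_le_sum (fun j _ => hx j) (mem_univ i)
    _ = 1 := hsum
  -- the eigenvalue candidates are bounded by M
  have hbound : ∀ p ∈ T, p.1 ≤ M := by
    rintro p hpT
    obtain ⟨hl, hx, hsum, hle⟩ := hpT
    calc p.1 = ∑ i, p.1 * p.2 i := by rw [← Finset.mul_sum, hsum, mul_one]
    _ ≤ ∑ i, B.mulVec p.2 i := Finset.sum_le_sum fun i _ => hle i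
    _ = ∑ i, ∑ j, B i j * p.2 j := by simp [Matrix.mulVec, dotProduct]
    _ ≤ ∑ i, ∑ j, B i j := by
        refine Finset.sum_le_sum fun i _ => Finset.sum_le_sum fun j _ => ?_
        calc B i j * p.2 j ≤ B i j * 1 :=
              mul_le_mul_of_nonneg_left (hcoord p ⟨hl, hx, hsum, hle⟩ j) (hB i j).le
        _ = B i j := mul_one _
  have hTclosed : IsClosed T := by
    have h1 : IsClosed {p : ℝ × (n → ℝ) | 0 ≤ p.1} := isClosed_le continuous_const continuous_fst
    have h2 : IsClosed {p : ℝ × (n → ℝ) | ∀ i, 0 ≤ p.2 i} := by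
      rw [Set.setOf_forall]
      exact isClosed_iInter fun i =>
        isClosed_le continuous_const ((continuous_apply i).comp continuous_snd)
    have h3 : IsClosed {p : ℝ × (n → ℝ) | (∑ i, p.2 i) = 1} := by
      refine isClosed_eq ?_ continuous_const
      exact continuous_finset_sum _ fun i _ => (continuous_apply i).comp continuous_snd
    have h4 : IsClosed {p : ℝ × (n → ℝ) | ∀ i, p.1 * p.2 i ≤ B.mulVec p.2 i} := by
      rw [Set.setOf_forall]
      refine isClosed_iInter fun i => isClosed_le
        (continuous_fst.mul ((continuous_apply i).comp continuous_snd)) ?_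
      have : (fun p : ℝ × (n → ℝ) => B.mulVec p.2 i) =
          fun p => ∑ j, B i j * p.2 j := by
        funext p; simp [Matrix.mulVec, dotProduct]
      rw [this]
      exact continuous_finset_sum _ fun j _ =>
        continuous_const.mul ((continuous_apply j).comp continuous_snd)
    have : T = {p : ℝ × (n → ℝ) | 0 ≤ p.1} ∩ ({p | ∀ i, 0 ≤ p.2 i} ∩
        ({p | (∑ i, p.2 i) = 1} ∩ {p | ∀ i, p.1 * p.2 i ≤ B.mulVec p.2 i})) := by
      ext p; simp [hT, Set.mem_setOf_eq, and_assoc]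
    rw [this]
    exact h1.inter (h2.inter (h3.inter h4))
  have hTcompact : IsCompact T := by
    have hC : IsCompact ((Set.Icc (0:ℝ) M) ×ˢ (Set.Icc (0 : n → ℝ) 1)) :=
      isCompact_Icc.prod isCompact_Icc
    refine hC.of_isClosed_subset hTclosed ?_
    rintro p hpT
    obtain ⟨hl, hx, hsum, hle⟩ := hpT
    exact ⟨⟨hl, hbound p ⟨hl, hx, hsum, hle⟩⟩, fun i => hx i, fun i => hcoord p ⟨hl, hx, hsum, hle⟩ i⟩
  -- nonempty witness with positive eigenvalue candidate
  set N : ℕ := Fintype.card n with hN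
  have hNpos : 0 < (N : ℝ) := by
    have := Fintype.card_pos (α := n); exact_mod_cast this
  set x₀ : n → ℝ := fun _ => (N : ℝ)⁻¹ with hx₀
  have hx₀pos : ∀ i, 0 < x₀ i := fun i => inv_pos.mpr hNpos
  have hx₀sum : (∑ i, x₀ i) = 1 := by
    rw [hx₀, Finset.sum_const, Finset.card_univ, nsmul_eq_mul]
    exact mul_inv_cancel₀ hNpos.ne'
  have hw₀pos : ∀ i, 0 < B.mulVec x₀ i :=
    rpf_mulVec_pos B hB x₀ (fun j => (hx₀pos j).le) (Classical.arbitrary n)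
      (hx₀pos (Classical.arbitrary n))
  set lam₀ : ℝ := Finset.univ.inf' Finset.univ_nonempty (fun i => B.mulVec x₀ i) with hlam₀
  have hlam₀pos : 0 < lam₀ := by
    rw [hlam₀]
    exact (Finset.lt_inf'_iff _).mpr fun i _ => hw₀pos i
  have hx₀le : ∀ i, x₀ i ≤ 1 := by
    intro i
    rw [hx₀]
    have : (1:ℝ) ≤ (N:ℝ) := by exact_mod_cast Fintype.card_pos (α := n)
    simpa using inv_le_one_of_one_le₀ this
  have hmem₀ : ((lam₀, x₀) : ℝ × (n → ℝ)) ∈ T := by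
    refine ⟨hlam₀pos.le, fun i => (hx₀pos i).le, hx₀sum, fun i => ?_⟩
    calc lam₀ * x₀ i ≤ lam₀ * 1 := mul_le_mul_of_nonneg_left (hx₀le i) hlam₀pos.le
    _ = lam₀ := mul_one _
    _ ≤ B.mulVec x₀ i := Finset.inf'_le _ (mem_univ i)
  -- maximize the first coordinate
  obtain ⟨p, hpT, hpmax⟩ := hTcompact.exists_isMaxOn ⟨_, hmem₀⟩
    (continuous_fst.continuousOn)
  obtain ⟨hp1, hp2, hp3, hp4⟩ := hpT
  set lam := p.1 with hlam
  set x := p.2 with hx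
  have hlampos : 0 < lam := lt_of_lt_of_le hlam₀pos (hpmax hmem₀)
  -- some coordinate of x is positive
  have hxpos : ∃ j, 0 < x j := by
    by_contra h
    push_neg at h
    have : (∑ i, x i) = 0 := le_antisymm (Finset.sum_nonpos fun i _ => h i)
      (Finset.sum_nonneg fun i _ => hp2 i)
    rw [hp3] at this; norm_num at this
  obtain ⟨j₁, hj₁⟩ := hxpos
  have hwpos : ∀ i, 0 < B.mulVec x i := rpf_mulVec_pos B hB x hp2 j₁ hj₁
  -- claim: B x = lam • x
  have key : B.mulVec x = lam • x := by
    by_contra hne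
    have hynn : ∀ i, 0 ≤ B.mulVec x i - lam * x i := fun i => sub_nonneg.mpr (hp4 i)
    have hyex : ∃ j, 0 < B.mulVec x j - lam * x j := by
      by_contra h
      push_neg at h
      apply hne
      funext i
      have := le_antisymm (h i) (hynn i)
      have : B.mulVec x i = lam * x i := by linarith [this]
      simpa [Pi.smul_apply, smul_eq_mul] using this
    obtain ⟨j₂, hj₂⟩ := hyex
    set y : n → ℝ := fun i => B.mulVec x i - lam * x i with hy
    have hBy : ∀ i, 0 < B.mulVec y i := rpf_mulVec_pos B hB y hynn j₂ hj₂
    -- w = B x, z = normalized w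
    set w := B.mulVec x with hw
    set c : ℝ := (∑ i, w i)⁻¹ with hc
    have hwsumpos : 0 < ∑ i, w i := Finset.sum_pos (fun i _ => hwpos i) univ_nonempty
    have hcpos : 0 < c := inv_pos.mpr hwsumpos
    set z : n → ℝ := c • w with hz
    have hzpos : ∀ i, 0 < z i := fun i => mul_pos hcpos (hwpos i)
    have hzsum : (∑ i, z i) = 1 := by
      rw [hz]
      simp only [Pi.smul_apply, smul_eq_mul, ← Finset.mul_sum]
      exact inv_mul_cancel₀ hwsumpos.ne'
    -- gap
    have hgap : ∀ i, 0 < B.mulVec z i - lam * z i := by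
      intro i
      have hBw : B.mulVec w i - lam * w i = B.mulVec y i := by
        have : B.mulVec y = B.mulVec w - lam • B.mulVec x := by
          have : y = w - lam • x := by funext i; simp [hy, hw, Pi.smul_apply, smul_eq_mul]
          rw [this, Matrix.mulVec_sub, Matrix.mulVec_smul]
        rw [this]
        simp [hw, Pi.smul_apply, smul_eq_mul]
      have hBz : B.mulVec z = c • B.mulVec w := by rw [hz, Matrix.mulVec_smul]
      have : B.mulVec z i - lam * z i = c * (B.mulVec w i - lam * w i) := by
        rw [hBz]
        simp only [hz, Pi.smul_apply, smul_eq_mul]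
        ring
      rw [this, hBw]
      exact mul_pos hcpos (hBy i)
    set eps : ℝ := Finset.univ.inf' Finset.univ_nonempty
      (fun i => B.mulVec z i - lam * z i) with heps
    have hepspos : 0 < eps := (Finset.lt_inf'_iff _).mpr fun i _ => hgap i
    have hzle1 : ∀ i, z i ≤ 1 := by
      intro i
      calc z i ≤ ∑ j, z j := Finset.single_le_sum (fun j _ => (hzpos j).le) (mem_univ i)
      _ = 1 := hzsum
    have hmem : ((lam + eps, z) : ℝ × (n → ℝ)) ∈ T := by
      refine ⟨by positivity, fun i => (hzpos i).le, hzsum, fun i => ?_⟩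
      have h1 : eps * z i ≤ eps := by
        calc eps * z i ≤ eps * 1 := mul_le_mul_of_nonneg_left (hzle1 i) hepspos.le
        _ = eps := mul_one _
      have h2 : eps ≤ B.mulVec z i - lam * z i := Finset.inf'_le _ (mem_univ i)
      show (lam + eps) * z i ≤ B.mulVec z i
      nlinarith [hzpos i]
    have := hpmax hmem
    simp only [← hlam] at this
    have : lam + eps ≤ lam := this
    linarith
  have hxallpos : ∀ i, 0 < x i := by
    intro i
    have h1 : lam * x i = B.mulVec x i := by
      rw [key]; simp [Pi.smul_apply, smul_eq_mul]
    have h2 : 0 < lam * x i := h1 ▸ hwpos i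
    rcases (hp2 i).lt_or_eq with h | h
    · exact h
    · exfalso; rw [← h, mul_zero] at h2; exact lt_irrefl 0 h2
  exact ⟨lam, x, hlampos, hxallpos, key⟩

/-- **Ruelle–Perron–Frobenius, existence part.**
A primitive square matrix with nonnegative real entries, indexed by a finite
nonempty type, has a strictly positive eigenvalue with a strictly positive
right eigenvector. -/
theorem rpf_exists_positive_eigenpair
    {n : Type*} [Fintype n] [Nonempty n] [DecidableEq n]
    (A : Matrix n n ℝ) (hA : ∀ i j, 0 ≤ A i j)
    (hprim : ∃ k : ℕ, 1 ≤ k ∧ ∀ i j, 0 < (A ^ k) i j) :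
    ∃ (s : ℝ) (r : n → ℝ), 0 < s ∧ (∀ i, 0 < r i) ∧ A.mulVec r = s • r := by
  classical
  obtain ⟨k, hk1, hkpos⟩ := hprim
  obtain ⟨lam, x, hlam, hx, hkey⟩ := rpf_positive_case (A ^ k) hkpos
  set s : ℝ := lam ^ ((k : ℝ)⁻¹) with hs
  have hspos : 0 < s := Real.rpow_pos_of_pos hlam _
  have hsk : s ^ k = lam := by
    rw [hs, ← Real.rpow_natCast (lam ^ ((k:ℝ)⁻¹)) k, ← Real.rpow_mul hlam.le]
    rw [inv_mul_cancel₀ ((Nat.cast_pos.mpr hk1).ne' : (k:ℝ) ≠ 0)]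
    exact Real.rpow_one lam
  set f : ℕ → (n → ℝ) := fun j => s ^ (k - j) • (A ^ j).mulVec x with hf
  set r : n → ℝ := ∑ j ∈ Finset.range k, f j with hr
  have hrpos : ∀ i, 0 < r i := by
    intro i
    rw [hr]
    have : (∑ j ∈ Finset.range k, f j) i = ∑ j ∈ Finset.range k, f j i := by
      simp [Finset.sum_apply]
    rw [this]
    refine Finset.sum_pos' (fun j _ => ?_) ⟨0, Finset.mem_range.mpr hk1, ?_⟩
    · rw [hf]
      simp only [Pi.smul_apply, smul_eq_mul]
      refine mul_nonneg (by positivity) ?_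
      simp only [Matrix.mulVec, dotProduct]
      exact Finset.sum_nonneg fun l _ =>
        mul_nonneg (rpf_pow_entry_nonneg A hA j i l) (hx l).le
    · rw [hf]
      simp only [pow_zero, Matrix.one_mulVec, Pi.smul_apply, smul_eq_mul]
      exact mul_pos (by positivity) (hx i)
  have hAr : A.mulVec r = s • r := by
    have hmv : ∀ j, A.mulVec ((A ^ j).mulVec x) = (A ^ (j+1)).mulVec x := by
      intro j
      rw [Matrix.mulVec_mulVec, ← pow_succ']
    have hAf : ∀ j, A.mulVec (f j) = s ^ (k - j) • (A ^ (j+1)).mulVec x := by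
      intro j
      rw [hf]
      simp only
      rw [Matrix.mulVec_smul, hmv]
    -- define g j = s^(k-j) • (A^j).mulVec x  (same as f); A r = ∑_{j∈range k} (s⁻¹-shift)...
    have hfk0 : s • f k = s • f 0 := by
      have h1 : f k = (A ^ k).mulVec x := by
        rw [hf]; simp
      have h2 : f 0 = s ^ k • x := by
        rw [hf]; simp
      rw [h1, h2, hkey, hsk]
    have hstep : ∀ j < k, A.mulVec (f j) = s • f (j+1) := by
      intro j hjk
      rw [hAf j, hf]
      simp only [smul_smul]
      congr 1
      rw [← pow_succ']
      congr 1
      omega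
    set g : ℕ → (n → ℝ) := fun j => s • f j with hg
    have hAr1 : A.mulVec r = ∑ j ∈ Finset.range k, g (j+1) := by
      have : A.mulVec r = A.mulVecLin r := by rw [Matrix.mulVecLin_apply]
      rw [this, hr, map_sum]
      refine Finset.sum_congr rfl fun j hj => ?_
      rw [Matrix.mulVecLin_apply, hstep j (Finset.mem_range.mp hj)]
    have h1 : ∑ j ∈ Finset.range (k+1), g j = (∑ j ∈ Finset.range k, g (j+1)) + g 0 :=
      Finset.sum_range_succ' g k
    have h2 : ∑ j ∈ Finset.range (k+1), g j = (∑ j ∈ Finset.range k, g j) + g k :=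
      Finset.sum_range_succ g k
    have hgk0 : g k = g 0 := hfk0
    have : ∑ j ∈ Finset.range k, g (j+1) = ∑ j ∈ Finset.range k, g j := by
      have := h1.symm.trans h2
      rw [hgk0] at this
      exact add_right_cancel this
    rw [hAr1, this, hr, Finset.smul_sum]
  exact ⟨s, r, hspos, hrpos, hAr⟩
end

section
/- Let A be a primitive square matrix with nonnegative real entries indexed by a finite nonempty type, and let s > 0 and r with all entries strictly positive satisfy A·r = s·r. Then there exists a vector l with all entries strictly positive such that lᵀ·A = s·lᵀ and Σ_w l_w · r_w = 1. -/
/-- **Ruelle–Perron–Frobenius, left eigenvector.**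
For a primitive nonnegative matrix with positive eigenvalue `s` and positive
right eigenvector `r`, there is a strictly positive left eigenvector `l` for
`s`, normalized so that `∑ w, l w * r w = 1`. -/
theorem rpf_exists_positive_left_eigenvector
    {n : Type*} [Fintype n] [Nonempty n] [DecidableEq n]
    (A : Matrix n n ℝ) (hA : ∀ i j, 0 ≤ A i j)
    (hprim : ∃ k : ℕ, 1 ≤ k ∧ ∀ i j, 0 < (A ^ k) i j)
    (s : ℝ) (hs : 0 < s) (r : n → ℝ) (hr : ∀ i, 0 < r i)
    (heig : A.mulVec r = s • r) :
    ∃ l : n → ℝ, (∀ i, 0 < l i) ∧ Matrix.vecMul l A = s • l ∧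
      ∑ w, l w * r w = 1 := by
  classical
  obtain ⟨k, hk1, hk⟩ := hprim
  have hrne : r ≠ 0 := fun h => (hr (Classical.arbitrary n)).ne' (congrFun h _)
  set B := A - s • (1 : Matrix n n ℝ) with hB
  have hBr : B.mulVec r = 0 := by
    simp [hB, Matrix.sub_mulVec, heig, Matrix.smul_mulVec]
  have hdet : B.det = 0 := by
    rw [← Matrix.exists_mulVec_eq_zero_iff]
    exact ⟨r, hrne, hBr⟩
  have hdetT : (B.transpose).det = 0 := by rwa [Matrix.det_transpose]
  obtain ⟨l0, hl0ne, hl0⟩ := (Matrix.exists_mulVec_eq_zero_iff).mpr hdetT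
  rw [Matrix.mulVec_transpose] at hl0
  have hsmul : Matrix.vecMul l0 (s • (1 : Matrix n n ℝ)) = s • l0 := by
    funext j
    simp [Matrix.vecMul, dotProduct, Matrix.one_apply, mul_comm]
  have hlv : Matrix.vecMul l0 A = s • l0 := by
    have h1 := hl0
    rw [hB, Matrix.vecMul_sub, hsmul, sub_eq_zero] at h1
    exact h1
  -- absolute value vector
  set m : n → ℝ := fun i => |l0 i| with hm
  have hmnn : ∀ i, 0 ≤ m i := fun i => abs_nonneg _
  have hle : ∀ j, s * m j ≤ Matrix.vecMul m A j := by
    intro j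
    have h1 : s * l0 j = Matrix.vecMul l0 A j := (congrFun hlv j).symm
    have h2 : Matrix.vecMul l0 A j = ∑ i, l0 i * A i j := by
      simp [Matrix.vecMul, dotProduct]
    have h3 : Matrix.vecMul m A j = ∑ i, |l0 i| * A i j := by
      simp [Matrix.vecMul, dotProduct, hm]
    calc s * m j = |s * l0 j| := by
          rw [abs_mul, abs_of_pos hs]
      _ = |∑ i, l0 i * A i j| := by rw [h1, h2]
      _ ≤ ∑ i, |l0 i * A i j| := Finset.abs_sum_le_sum_abs _ _
      _ = ∑ i, |l0 i| * A i j := by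
          refine Finset.sum_congr rfl fun i _ => ?_
          rw [abs_mul, abs_of_nonneg (hA i j)]
      _ = Matrix.vecMul m A j := h3.symm
  have hsum0 : ∑ j, (Matrix.vecMul m A j - s * m j) * r j = 0 := by
    have hd : dotProduct (Matrix.vecMul m A) r = s * (dotProduct m r) := by
      rw [← Matrix.dotProduct_mulVec, heig, dotProduct_smul, smul_eq_mul]
    have : ∑ j, (Matrix.vecMul m A j - s * m j) * r j
        = dotProduct (Matrix.vecMul m A) r - s * (dotProduct m r) := by
      simp [dotProduct, sub_mul, Finset.sum_sub_distrib, Finset.mul_sum, mul_assoc]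
    rw [this, hd, sub_self]
  have hm_eig : Matrix.vecMul m A = s • m := by
    funext j
    have hzero : ∀ j' ∈ Finset.univ, (Matrix.vecMul m A j' - s * m j') * r j' = 0 := by
      rw [← Finset.sum_eq_zero_iff_of_nonneg]
      · exact hsum0
      · intro j' _
        exact mul_nonneg (sub_nonneg.mpr (hle j')) (hr j').le
    have := hzero j (Finset.mem_univ j)
    have h2 : Matrix.vecMul m A j - s * m j = 0 := by
      rcases mul_eq_zero.mp this with h | h
      · exact h
      · exact absurd h (hr j).ne'
    have := sub_eq_zero.mp h2
    simpa using this
  -- power iteration: m is left eigenvector of A^N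
  have hpow : ∀ N : ℕ, Matrix.vecMul m (A ^ N) = s ^ N • m := by
    intro N
    induction N with
    | zero => simp
    | succ N ih =>
      rw [pow_succ, ← Matrix.vecMul_vecMul, ih, Matrix.smul_vecMul, hm_eig,
        pow_succ, smul_smul]
  -- m is nonzero somewhere
  obtain ⟨i0, hi0⟩ : ∃ i, m i ≠ 0 := by
    by_contra h
    push_neg at h
    exact hl0ne (funext fun i => abs_eq_zero.mp (h i))
  have hi0pos : 0 < m i0 := lt_of_le_of_ne (hmnn i0) (Ne.symm hi0)
  -- strict positivity of m
  have hmpos : ∀ j, 0 < m j := by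
    intro j
    have h1 : s ^ k * m j = ∑ i, m i * (A ^ k) i j := by
      have := congrFun (hpow k) j
      simp only [Matrix.vecMul, dotProduct, Pi.smul_apply, smul_eq_mul] at this
      rw [← this]
    have hpos : 0 < ∑ i, m i * (A ^ k) i j := by
      refine Finset.sum_pos' (fun i _ => mul_nonneg (hmnn i) (hk i j).le) ?_
      exact ⟨i0, Finset.mem_univ i0, mul_pos hi0pos (hk i0 j)⟩
    have hsk : 0 < s ^ k := pow_pos hs k
    nlinarith
  -- normalization
  set c : ℝ := ∑ w, m w * r w with hc
  have hcpos : 0 < c := by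
    refine Finset.sum_pos (fun w _ => mul_pos (hmpos w) (hr w)) Finset.univ_nonempty
  refine ⟨c⁻¹ • m, fun i => mul_pos (inv_pos.mpr hcpos) (hmpos i), ?_, ?_⟩
  · rw [Matrix.smul_vecMul, hm_eig, smul_comm]
  · have : ∑ w, (c⁻¹ • m) w * r w = c⁻¹ * ∑ w, m w * r w := by
      simp [Finset.mul_sum, mul_assoc]
    rw [this, ← hc, inv_mul_cancel₀ hcpos.ne']
end

section
/- Let A be a primitive square matrix with nonnegative real entries indexed by a finite nonempty type, and let s > 0 and r with all entries strictly positive satisfy A·r = s·r. Then every complex eigenvalue z of A (i.e., every element of the spectrum of A viewed as a complex matrix) with z ≠ s satisfies |z| < s, and the eigenspace of A associated with the eigenvalue s is one-dimensional. -/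
/-!
Comparison with the positive eigenvector `r`: if `s • w ≤ A w`, choose `c` minimal with
`w ≤ c • r`; then `d = c • r - w` is nonnegative, vanishes at some coordinate and satisfies
`A^k d ≤ s^k d`, so positivity of `A^k` forces `d = 0`. Hence `w` is a multiple of `r`, which
gives the eigenspace. If `A v = z v` with `s ≤ ‖z‖`, the moduli `|v|` satisfy
`s |v| ≤ ‖z‖ |v| ≤ A |v|`, so `|v|` is an `s`-eigenvector; then the triangle inequality in a row
of `A^k v = z^k v` is an equality, all `v j` have a common argument, and `z = s`.
-/

open Finset Matrix Complex

theorem exists_le_smul_and_eq_mul {𝕜 n : Type*} [Field 𝕜] [LinearOrder 𝕜] [IsStrictOrderedRing 𝕜]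
    [Fintype n] [Nonempty n] {r : n → 𝕜} (hr : ∀ i, 0 < r i) (w : n → 𝕜) :
    ∃ (c : 𝕜) (i : n), w ≤ c • r ∧ w i = c * r i := by
  obtain ⟨i, -, hi⟩ := exists_max_image univ (fun j => w j / r j) univ_nonempty
  exact ⟨w i / r i, i, fun j => (div_le_iff₀ (hr j)).1 (hi j (mem_univ j)),
    (div_mul_cancel₀ _ (hr i).ne').symm⟩

theorem norm_smul_sum_eq_norm_sum_smul {F ι : Type*} [NormedAddCommGroup F] [InnerProductSpace ℝ F]
    {s : Finset ι} {x : ι → F} (h : ‖∑ i ∈ s, x i‖ = ∑ i ∈ s, ‖x i‖) {j : ι} (hj : j ∈ s) :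
    ‖x j‖ • ∑ i ∈ s, x i = ‖∑ i ∈ s, x i‖ • x j := by
  have hle : ∀ i ∈ s, inner ℝ (∑ i ∈ s, x i) (x i) ≤ ‖∑ i ∈ s, x i‖ * ‖x i‖ :=
    fun i _ => real_inner_le_norm _ _
  have hsum : ∑ i ∈ s, inner ℝ (∑ i ∈ s, x i) (x i) = ∑ i ∈ s, ‖∑ i ∈ s, x i‖ * ‖x i‖ := by
    rw [← inner_sum, real_inner_self_eq_norm_mul_norm, ← mul_sum, ← h]
  exact inner_eq_norm_mul_iff_real.1 ((sum_eq_sum_iff_of_le hle).1 hsum j hj)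

namespace Matrix

variable {n : Type*} [Fintype n]

theorem pow_mulVec_eq_pow_smul [DecidableEq n] {R : Type*} [CommSemiring R] {A : Matrix n n R}
    {μ : R} {v : n → R} (h : A *ᵥ v = μ • v) (m : ℕ) : (A ^ m) *ᵥ v = μ ^ m • v := by
  induction m with
  | zero => simp
  | succ m ih => rw [pow_succ, ← mulVec_mulVec, h, mulVec_smul, ih, smul_smul, pow_succ']

section Ordered

variable {𝕜 : Type*} [Field 𝕜] [LinearOrder 𝕜] [IsStrictOrderedRing 𝕜] {A B : Matrix n n 𝕜}

theorem mulVec_mono (hA : ∀ i j, 0 ≤ A i j) : Monotone (A *ᵥ ·) :=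
  fun _ _ h i => sum_le_sum fun j _ => mul_le_mul_of_nonneg_left (h j) (hA i j)

theorem mulVec_apply_pos (hB : ∀ i j, 0 < B i j) {w : n → 𝕜} (hw : 0 ≤ w) (hw0 : w ≠ 0) (i : n) :
    0 < (B *ᵥ w) i := by
  obtain ⟨j, hj⟩ : ∃ j, w j ≠ 0 := Function.ne_iff.1 hw0
  exact sum_pos' (fun j _ => mul_nonneg (hB i j).le (hw j))
    ⟨j, mem_univ j, mul_pos (hB i j) ((hw j).lt_of_ne' hj)⟩

theorem smul_pow_le_pow_mulVec [DecidableEq n] (hA : ∀ i j, 0 ≤ A i j) {s : 𝕜} (hs : 0 ≤ s)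
    {w : n → 𝕜} (h : s • w ≤ A *ᵥ w) (m : ℕ) : s ^ m • w ≤ (A ^ m) *ᵥ w := by
  induction m with
  | zero => simp
  | succ m ih =>
    calc s ^ (m + 1) • w = s ^ m • s • w := by rw [pow_succ, mul_smul]
      _ ≤ s ^ m • (A *ᵥ w) := smul_le_smul_of_nonneg_left h (pow_nonneg hs m)
      _ = A *ᵥ (s ^ m • w) := (mulVec_smul _ _ _).symm
      _ ≤ A *ᵥ ((A ^ m) *ᵥ w) := mulVec_mono hA ih
      _ = (A ^ (m + 1)) *ᵥ w := by rw [mulVec_mulVec, pow_succ']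

variable [Nonempty n] {r : n → 𝕜}

theorem exists_eq_smul_of_smul_le_mulVec_of_pos (hB : ∀ i j, 0 < B i j) (hr : ∀ i, 0 < r i)
    {σ : 𝕜} (hBr : B *ᵥ r = σ • r) {w : n → 𝕜} (hw : σ • w ≤ B *ᵥ w) : ∃ c : 𝕜, w = c • r := by
  obtain ⟨c, i, hle, hi⟩ := exists_le_smul_and_eq_mul hr w
  have hBd : B *ᵥ (c • r - w) ≤ σ • (c • r - w) := by
    rw [mulVec_sub, mulVec_smul, hBr, smul_sub, smul_comm]
    exact sub_le_sub_left hw _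
  have hd : c • r - w = 0 := by
    by_contra hd
    have hpos := mulVec_apply_pos hB (sub_nonneg.2 hle) hd i
    have hi' := hBd i
    simp only [Pi.smul_apply, Pi.sub_apply, smul_eq_mul, hi, sub_self, mul_zero] at hi'
    exact hpos.not_ge hi'
  exact ⟨c, (sub_eq_zero.1 hd).symm⟩

variable [DecidableEq n] {k : ℕ} {s : 𝕜}

theorem exists_eq_smul_of_smul_le_mulVec (hA : ∀ i j, 0 ≤ A i j) (hk : ∀ i j, 0 < (A ^ k) i j)
    (hs : 0 ≤ s) (hr : ∀ i, 0 < r i) (hAr : A *ᵥ r = s • r) {w : n → 𝕜} (hw : s • w ≤ A *ᵥ w) :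
    ∃ c : 𝕜, w = c • r :=
  exists_eq_smul_of_smul_le_mulVec_of_pos hk hr (pow_mulVec_eq_pow_smul hAr k)
    (smul_pow_le_pow_mulVec hA hs hw k)

theorem eigenspace_toLin'_eq_span (hA : ∀ i j, 0 ≤ A i j) (hk : ∀ i j, 0 < (A ^ k) i j)
    (hs : 0 ≤ s) (hr : ∀ i, 0 < r i) (hAr : A *ᵥ r = s • r) :
    Module.End.eigenspace (toLin' A) s = Submodule.span 𝕜 {r} := by
  refine le_antisymm (fun v hv => ?_) ?_
  · rw [Module.End.mem_eigenspace_iff, toLin'_apply] at hv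
    obtain ⟨c, hc⟩ := exists_eq_smul_of_smul_le_mulVec hA hk hs hr hAr hv.ge
    exact Submodule.mem_span_singleton.2 ⟨c, hc.symm⟩
  · rw [Submodule.span_le, Set.singleton_subset_iff, SetLike.mem_coe,
      Module.End.mem_eigenspace_iff, toLin'_apply]
    exact hAr

end Ordered

theorem norm_map_ofReal_mulVec_le {M : Matrix n n ℝ} (hM : ∀ i j, 0 ≤ M i j) (v : n → ℂ) (i : n) :
    ‖(M.map ofReal *ᵥ v) i‖ ≤ (M *ᵥ fun j => ‖v j‖) i := by
  refine (norm_sum_le _ _).trans_eq (sum_congr rfl fun j _ => ?_)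
  change ‖(M i j : ℂ) * v j‖ = M i j * ‖v j‖
  rw [norm_mul, norm_real, Real.norm_of_nonneg (hM i j)]

theorem map_ofReal_mulVec (M : Matrix n n ℝ) (w : n → ℝ) :
    M.map ofReal *ᵥ (ofReal ∘ w) = ofReal ∘ (M *ᵥ w) :=
  funext fun i => (RingHom.map_mulVec ofRealHom M w i).symm

theorem exists_eq_mul_norm_of_norm_mulVec_eq {B : Matrix n n ℝ} (hB : ∀ i j, 0 < B i j)
    {v : n → ℂ} {i : n} (h : ‖(B.map ofReal *ᵥ v) i‖ = (B *ᵥ fun j => ‖v j‖) i) :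
    ∃ u : ℂ, ∀ j, v j = u * ‖v j‖ := by
  by_cases hv : v = 0
  · exact ⟨0, by simp [hv]⟩
  set T := ∑ j, (B i j : ℂ) * v j
  have hT : 0 < ‖T‖ := h ▸ mulVec_apply_pos hB (fun j => norm_nonneg (v j))
    (fun h0 => hv (funext fun j => norm_eq_zero.1 (congrFun h0 j))) i
  have h' : ‖T‖ = ∑ j, ‖(B i j : ℂ) * v j‖ := by
    simpa [mulVec, dotProduct, norm_mul, abs_of_pos (hB i _)] using h
  refine ⟨T / ‖T‖, fun j => ?_⟩
  have key := norm_smul_sum_eq_norm_sum_smul h' (mem_univ j)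
  rw [norm_mul, norm_real, Real.norm_of_nonneg (hB i j).le, real_smul, real_smul] at key
  rw [div_mul_eq_mul_div, eq_div_iff (ofReal_ne_zero.2 hT.ne')]
  refine mul_left_cancel₀ (ofReal_ne_zero.2 (hB i j).ne') ?_
  push_cast at key
  change (B i j : ℂ) * ‖v j‖ * T = ‖T‖ * (B i j * v j) at key
  linear_combination -key

variable [Nonempty n] [DecidableEq n] {A : Matrix n n ℝ} {k : ℕ} {s : ℝ} {r : n → ℝ}

theorem eq_of_mulVec_eq_smul_of_le_norm (hA : ∀ i j, 0 ≤ A i j) (hk : ∀ i j, 0 < (A ^ k) i j)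
    (hs : 0 ≤ s) (hr : ∀ i, 0 < r i) (hAr : A *ᵥ r = s • r) {z : ℂ} {v : n → ℂ}
    (hv : A.map ofReal *ᵥ v = z • v) (hv0 : v ≠ 0) (hz : s ≤ ‖z‖) : z = s := by
  set w : n → ℝ := fun j => ‖v j‖
  have hAw : A *ᵥ w = s • w := by
    have hzw : ‖z‖ • w ≤ A *ᵥ w := fun i => by
      simpa [w, hv, norm_mul] using norm_map_ofReal_mulVec_le hA v i
    obtain ⟨c, hc⟩ := exists_eq_smul_of_smul_le_mulVec hA hk hs hr hAr
      ((smul_le_smul_of_nonneg_right hz fun j => norm_nonneg (v j)).trans hzw)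
    rw [hc, mulVec_smul, hAr, smul_comm]
  have hAkv : (A ^ k).map ofReal *ᵥ v = z ^ k • v := by
    rw [show (A ^ k).map ofReal = A.map ofReal ^ k from Matrix.map_pow A ofRealHom k]
    exact pow_mulVec_eq_pow_smul hv k
  obtain ⟨i⟩ := ‹Nonempty n›
  have heq : ‖((A ^ k).map ofReal *ᵥ v) i‖ = ((A ^ k) *ᵥ w) i := by
    refine le_antisymm (norm_map_ofReal_mulVec_le (fun i j => (hk i j).le) v i) ?_
    rw [hAkv, pow_mulVec_eq_pow_smul hAw k]
    simp only [Pi.smul_apply, smul_eq_mul, norm_mul, norm_pow, w]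
    gcongr
  obtain ⟨u, hu⟩ := exists_eq_mul_norm_of_norm_mulVec_eq hk heq
  have hvu : v = u • (ofReal ∘ w) := funext hu
  have hsv : A.map ofReal *ᵥ v = (s : ℂ) • v := by
    rw [hvu, mulVec_smul, map_ofReal_mulVec, hAw, smul_comm]
    funext j
    simp
  exact smul_left_injective ℂ hv0 (hv.symm.trans hsv)

end Matrix

open Complex in
/-- **Ruelle–Perron–Frobenius, spectral gap.**
For a primitive nonnegative matrix with positive eigenvalue `s` and positive
right eigenvector `r`, every complex eigenvalue `z ≠ s` satisfies `|z| < s`,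
and the eigenspace for `s` is one-dimensional. -/
theorem rpf_spectral_gap
    {n : Type*} [Fintype n] [Nonempty n] [DecidableEq n]
    (A : Matrix n n ℝ) (hA : ∀ i j, 0 ≤ A i j)
    (hprim : ∃ k : ℕ, 1 ≤ k ∧ ∀ i j, 0 < (A ^ k) i j)
    (s : ℝ) (hs : 0 < s) (r : n → ℝ) (hr : ∀ i, 0 < r i)
    (heig : A.mulVec r = s • r) :
    (∀ z ∈ spectrum ℂ (A.map (Complex.ofReal)), z ≠ (s : ℂ) → ‖z‖ < s) ∧
      Module.finrank ℝ
        (Module.End.eigenspace (Matrix.toLin' A) s) = 1 := by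
  obtain ⟨k, -, hk⟩ := hprim
  refine ⟨fun z hz hzs => ?_, ?_⟩
  · rw [← spectrum_toLin', ← Module.End.hasEigenvalue_iff_mem_spectrum] at hz
    obtain ⟨v, hv⟩ := hz.exists_hasEigenvector
    by_contra! hle
    exact hzs (eq_of_mulVec_eq_smul_of_le_norm hA hk hs.le hr heig
      (by simpa using hv.apply_eq_smul) hv.2 hle)
  · rw [eigenspace_toLin'_eq_span hA hk hs.le hr heig]
    exact finrank_span_singleton fun h => (hr (Classical.arbitrary n)).ne' (congrFun h _)
end

section
/- Let A be a primitive square matrix with nonnegative real entries indexed by a finite nonempty type, let s > 0, let r and l have all entries strictly positive, and assume A·r = s·r, lᵀ·A = s·lᵀ and Σ_w l_w·r_w = 1. Then for every real vector v, the sequence s^{−n}·(A^n·v) converges, as n → ∞, to (Σ_w l_w·v_w)·r. -/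
/-!
Normalise to `B = s⁻¹ • A`, so that `B *ᵥ r = r` and `l ᵥ* B = l`, and follow the extreme ratios
`max_i v i / r i` and `min_i v i / r i`. The nonnegative matrix `B` never widens the interval between
them, and the strictly positive `B ^ k` shrinks its length by a fixed factor `1 - 2c < 1`, so the
oscillation of `Bᵐ v` tends to zero. As `l ⬝ᵥ Bᵐ v = l ⬝ᵥ v` is an average of these ratios with weights
`l i * r i`, every ratio `(Bᵐ v) i / r i` converges to `l ⬝ᵥ v`.
-/

open Finset Filter Matrix Topology

theorem tendsto_zero_of_antitone_of_add_le_mul {d : ℕ → ℝ} (hd : Antitone d) (h0 : ∀ m, 0 ≤ d m)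
    {k : ℕ} {θ : ℝ} (hθ : θ < 1) (hstep : ∀ m, d (m + k) ≤ θ * d m) :
    Tendsto d atTop (𝓝 0) := by
  have hbdd : BddBelow (Set.range d) := ⟨0, Set.forall_mem_range.2 h0⟩
  have hL := tendsto_atTop_ciInf hd hbdd
  have hL0 : 0 ≤ ⨅ m, d m := ge_of_tendsto' hL h0
  have hLθ : ⨅ m, d m ≤ θ * ⨅ m, d m :=
    le_of_tendsto_of_tendsto' (hL.comp (tendsto_add_atTop_nat k)) (hL.const_mul θ) hstep
  rwa [show ⨅ m, d m = 0 by nlinarith] at hL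

section Pow

variable {ι α : Type*} [Fintype ι] [DecidableEq ι] [Semiring α]

theorem Matrix.pow_mulVec_eq_self {B : Matrix ι ι α} {r : ι → α} (h : B *ᵥ r = r) (m : ℕ) :
    B ^ m *ᵥ r = r := by
  induction m with
  | zero => simp
  | succ m ih => rw [pow_succ', ← mulVec_mulVec, ih, h]

theorem Matrix.vecMul_pow_eq_self {B : Matrix ι ι α} {l : ι → α} (h : l ᵥ* B = l) (m : ℕ) :
    l ᵥ* B ^ m = l := by
  induction m with
  | zero => simp
  | succ m ih => rw [pow_succ, ← vecMul_vecMul, ih, h]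

end Pow

section Ratio

variable {ι : Type*} [Fintype ι] [Nonempty ι] {r : ι → ℝ}

noncomputable def maxRatio (r v : ι → ℝ) : ℝ :=
  univ.sup' univ_nonempty fun i => v i / r i

noncomputable def minRatio (r v : ι → ℝ) : ℝ :=
  -maxRatio r (-v)

noncomputable def oscRatio (r v : ι → ℝ) : ℝ :=
  maxRatio r v - minRatio r v

theorem le_maxRatio_mul (hr : ∀ i, 0 < r i) (v : ι → ℝ) (i : ι) : v i ≤ maxRatio r v * r i :=
  (div_le_iff₀ (hr i)).1 (le_sup' (fun i => v i / r i) (mem_univ i))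

theorem minRatio_mul_le (hr : ∀ i, 0 < r i) (v : ι → ℝ) (i : ι) : minRatio r v * r i ≤ v i := by
  have := le_maxRatio_mul hr (-v) i
  rw [minRatio]
  simp only [Pi.neg_apply] at this
  linarith

theorem maxRatio_le (hr : ∀ i, 0 < r i) {v : ι → ℝ} {c : ℝ} (h : ∀ i, v i ≤ c * r i) :
    maxRatio r v ≤ c :=
  sup'_le _ _ fun i _ => (div_le_iff₀ (hr i)).2 (h i)

theorem exists_eq_maxRatio_mul (hr : ∀ i, 0 < r i) (v : ι → ℝ) : ∃ j, v j = maxRatio r v * r j := by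
  obtain ⟨j, -, hj⟩ := exists_mem_eq_sup' univ_nonempty fun i => v i / r i
  exact ⟨j, by rw [maxRatio, hj, div_mul_cancel₀ _ (hr j).ne']⟩

theorem exists_eq_minRatio_mul (hr : ∀ i, 0 < r i) (v : ι → ℝ) : ∃ j, v j = minRatio r v * r j := by
  obtain ⟨j, hj⟩ := exists_eq_maxRatio_mul hr (-v)
  exact ⟨j, by rw [minRatio]; simp only [Pi.neg_apply] at hj; linarith⟩

theorem oscRatio_nonneg (hr : ∀ i, 0 < r i) (v : ι → ℝ) : 0 ≤ oscRatio r v := by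
  obtain ⟨i⟩ := ‹Nonempty ι›
  have := (minRatio_mul_le hr v i).trans (le_maxRatio_mul hr v i)
  rw [oscRatio, sub_nonneg]
  exact le_of_mul_le_mul_right this (hr i)

theorem dotProduct_le_maxRatio (hr : ∀ i, 0 < r i) {l : ι → ℝ} (hl : ∀ i, 0 ≤ l i)
    (hlr : ∑ i, l i * r i = 1) (v : ι → ℝ) : l ⬝ᵥ v ≤ maxRatio r v :=
  calc l ⬝ᵥ v ≤ ∑ i, l i * (maxRatio r v * r i) :=
        sum_le_sum fun i _ => mul_le_mul_of_nonneg_left (le_maxRatio_mul hr v i) (hl i)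
    _ = maxRatio r v := by simp_rw [mul_left_comm _ (maxRatio r v), ← mul_sum, hlr, mul_one]

theorem minRatio_le_dotProduct (hr : ∀ i, 0 < r i) {l : ι → ℝ} (hl : ∀ i, 0 ≤ l i)
    (hlr : ∑ i, l i * r i = 1) (v : ι → ℝ) : minRatio r v ≤ l ⬝ᵥ v := by
  have := dotProduct_le_maxRatio hr hl hlr (-v)
  rw [minRatio, dotProduct_neg] at *
  linarith

theorem abs_sub_dotProduct_mul_le (hr : ∀ i, 0 < r i) {l : ι → ℝ} (hl : ∀ i, 0 ≤ l i)
    (hlr : ∑ i, l i * r i = 1) (v : ι → ℝ) (i : ι) :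
    |v i - (l ⬝ᵥ v) * r i| ≤ oscRatio r v * r i := by
  have hmax := mul_le_mul_of_nonneg_right (dotProduct_le_maxRatio hr hl hlr v) (hr i).le
  have hmin := mul_le_mul_of_nonneg_right (minRatio_le_dotProduct hr hl hlr v) (hr i).le
  have := le_maxRatio_mul hr v i
  have := minRatio_mul_le hr v i
  rw [abs_le, oscRatio]
  constructor <;> nlinarith

theorem maxRatio_mulVec_le (hr : ∀ i, 0 < r i) {C : Matrix ι ι ℝ} (hC : ∀ i j, 0 ≤ C i j)
    (hCr : C *ᵥ r = r) {c : ℝ} (hc : ∀ i j, c * r i ≤ C i j * r j) (v : ι → ℝ) :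
    maxRatio r (C *ᵥ v) ≤ maxRatio r v - c * oscRatio r v := by
  obtain ⟨j, hj⟩ := exists_eq_minRatio_mul hr v
  refine maxRatio_le hr fun i => ?_
  have hgap : ∀ j, 0 ≤ C i j * (maxRatio r v * r j - v j) := fun j =>
    mul_nonneg (hC i j) (sub_nonneg.2 (le_maxRatio_mul hr v j))
  -- the term at a minimising index `j` alone already accounts for the drop
  have hdrop : C i j * r j * oscRatio r v ≤ maxRatio r v * r i - (C *ᵥ v) i := by
    calc C i j * r j * oscRatio r v = C i j * (maxRatio r v * r j - v j) := by
          rw [hj, oscRatio]; ring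
      _ ≤ ∑ j, C i j * (maxRatio r v * r j - v j) :=
          single_le_sum (fun j _ => hgap j) (mem_univ j)
      _ = maxRatio r v * (C *ᵥ r) i - (C *ᵥ v) i := by
          simp only [mulVec, dotProduct, mul_sub, mul_sum, sum_sub_distrib, mul_left_comm]
      _ = maxRatio r v * r i - (C *ᵥ v) i := by rw [hCr]
  nlinarith [hc i j, oscRatio_nonneg hr v]

theorem le_minRatio_mulVec (hr : ∀ i, 0 < r i) {C : Matrix ι ι ℝ} (hC : ∀ i j, 0 ≤ C i j)
    (hCr : C *ᵥ r = r) {c : ℝ} (hc : ∀ i j, c * r i ≤ C i j * r j) (v : ι → ℝ) :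
    minRatio r v + c * oscRatio r v ≤ minRatio r (C *ᵥ v) := by
  have := maxRatio_mulVec_le hr hC hCr hc (-v)
  simp only [oscRatio, minRatio, mulVec_neg, neg_neg] at this ⊢
  linarith

theorem oscRatio_mulVec_le (hr : ∀ i, 0 < r i) {C : Matrix ι ι ℝ} (hC : ∀ i j, 0 ≤ C i j)
    (hCr : C *ᵥ r = r) {c : ℝ} (hc : ∀ i j, c * r i ≤ C i j * r j) (v : ι → ℝ) :
    oscRatio r (C *ᵥ v) ≤ (1 - 2 * c) * oscRatio r v := by
  have := maxRatio_mulVec_le hr hC hCr hc v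
  have := le_minRatio_mulVec hr hC hCr hc v
  unfold oscRatio at *
  linarith

theorem exists_pos_mul_le_mul (hr : ∀ i, 0 < r i) {C : Matrix ι ι ℝ} (hC : ∀ i j, 0 < C i j) :
    ∃ c > 0, ∀ i j, c * r i ≤ C i j * r j := by
  obtain ⟨p, hp⟩ := Finite.exists_min fun p : ι × ι => C p.1 p.2 * r p.2 / r p.1
  refine ⟨_, div_pos (mul_pos (hC p.1 p.2) (hr p.2)) (hr p.1), fun i j => ?_⟩
  exact (le_div_iff₀ (hr i)).1 (hp (i, j))

theorem tendsto_oscRatio_pow_mulVec [DecidableEq ι] (hr : ∀ i, 0 < r i) {B : Matrix ι ι ℝ}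
    (hB : ∀ i j, 0 ≤ B i j) (hBr : B *ᵥ r = r) {k : ℕ} (hk : ∀ i j, 0 < (B ^ k) i j)
    (v : ι → ℝ) : Tendsto (fun m => oscRatio r (B ^ m *ᵥ v)) atTop (𝓝 0) := by
  obtain ⟨c, hc0, hc⟩ := exists_pos_mul_le_mul hr hk
  have hBc : ∀ i j, 0 * r i ≤ B i j * r j := fun i j => by
    rw [zero_mul]; exact mul_nonneg (hB i j) (hr j).le
  refine tendsto_zero_of_antitone_of_add_le_mul (k := k) (θ := 1 - 2 * c)
    (antitone_nat_of_succ_le fun m => ?_) (fun m => oscRatio_nonneg hr _) (by linarith)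
    fun m => ?_
  · simpa [pow_succ', ← mulVec_mulVec] using oscRatio_mulVec_le hr hB hBr hBc (B ^ m *ᵥ v)
  · rw [add_comm m k, pow_add, ← mulVec_mulVec]
    exact oscRatio_mulVec_le hr (fun i j => (hk i j).le) (pow_mulVec_eq_self hBr k) hc _

theorem tendsto_of_tendsto_oscRatio (hr : ∀ i, 0 < r i) {l : ι → ℝ} (hl : ∀ i, 0 ≤ l i)
    (hlr : ∑ i, l i * r i = 1) {u : ℕ → ι → ℝ} {a : ℝ} (hu : ∀ m, l ⬝ᵥ u m = a)
    (hosc : Tendsto (fun m => oscRatio r (u m)) atTop (𝓝 0)) :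
    Tendsto u atTop (𝓝 (a • r)) := by
  refine tendsto_pi_nhds.2 fun i => tendsto_iff_norm_sub_tendsto_zero.2 ?_
  refine squeeze_zero (fun _ => norm_nonneg _) (fun m => ?_) (by simpa using hosc.mul_const (r i))
  simpa [hu m] using abs_sub_dotProduct_mul_le hr hl hlr (u m) i

end Ratio

/-- **Ruelle–Perron–Frobenius, power-method convergence.**
With Perron data `(s, r, l)` for a primitive nonnegative matrix `A`, for every
vector `v` the sequence `s⁻ⁿ • (Aⁿ.mulVec v)` converges to `(∑ w, l w * v w) • r`. -/
theorem rpf_power_method_convergence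
    {n : Type*} [Fintype n] [Nonempty n] [DecidableEq n]
    (A : Matrix n n ℝ) (hA : ∀ i j, 0 ≤ A i j)
    (hprim : ∃ k : ℕ, 1 ≤ k ∧ ∀ i j, 0 < (A ^ k) i j)
    (s : ℝ) (hs : 0 < s) (r l : n → ℝ)
    (hr : ∀ i, 0 < r i) (hl : ∀ i, 0 < l i)
    (hright : A.mulVec r = s • r) (hleft : Matrix.vecMul l A = s • l)
    (hnorm : ∑ w, l w * r w = 1) :
    ∀ v : n → ℝ,
      Filter.Tendsto (fun m : ℕ => (s ^ m)⁻¹ • (A ^ m).mulVec v)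
        Filter.atTop (nhds ((∑ w, l w * v w) • r)) := by
  intro v
  obtain ⟨k, -, hk⟩ := hprim
  have hpow : ∀ m : ℕ, (s⁻¹ • A) ^ m = (s ^ m)⁻¹ • A ^ m := fun m => by rw [smul_pow, inv_pow]
  have hB : ∀ i j, 0 ≤ (s⁻¹ • A) i j := fun i j => mul_nonneg (inv_pos.2 hs).le (hA i j)
  have hBr : (s⁻¹ • A) *ᵥ r = r := by rw [smul_mulVec, hright, inv_smul_smul₀ hs.ne']
  have hlB : l ᵥ* (s⁻¹ • A) = l := by rw [vecMul_smul, hleft, inv_smul_smul₀ hs.ne']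
  have hBk : ∀ i j, 0 < ((s⁻¹ • A) ^ k) i j := fun i j => by
    rw [hpow]; exact mul_pos (inv_pos.2 (pow_pos hs k)) (hk i j)
  have hinv : ∀ m, l ⬝ᵥ ((s⁻¹ • A) ^ m *ᵥ v) = l ⬝ᵥ v := fun m => by
    rw [dotProduct_mulVec, vecMul_pow_eq_self hlB]
  simpa [hpow, smul_mulVec, dotProduct] using tendsto_of_tendsto_oscRatio hr (fun i => (hl i).le) hnorm hinv
    (tendsto_oscRatio_pow_mulVec hr hB hBr hBk v)
end

section
/- Let A be a primitive square matrix with nonnegative real entries indexed by a finite nonempty type, let s > 0, let r and l have all entries strictly positive, and assume A·r = s·r, lᵀ·A = s·lᵀ and Σ_w l_w·r_w = 1. Then there exist a constant C > 0 and a number ρ with 0 ≤ ρ < 1 such that for every real vector v and every n ≥ 0, ‖s^{−n}·(A^n·v) − (Σ_w l_w·v_w)·r‖ ≤ C·ρ^n·‖v‖. -/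
/-!
Let `P = s⁻¹ A`, so that `P r = r` and `lᵀ P = lᵀ`. Primitivity gives a Doeblin
minorization `P ^ k ≥ ε r lᵀ` with `0 < ε < 1`. In the weighted sup-norm `max_j |x j| / r j`,
the nonnegative matrix `P` is nonexpansive, and on the hyperplane `l ⬝ x = 0` (which `P`
preserves) the matrix `P ^ k` contracts by the factor `1 - ε`. The error
`s⁻ᵐ Aᵐ v - (l ⬝ v) r` equals `Pᵐ (v - (l ⬝ v) r)`, and `v - (l ⬝ v) r` lies on that hyperplane.
-/

open Finset Filter Topology Matrix

theorem exists_mem_Ioo_mul_le {ι : Type*} [Finite ι] {Q f : ι → ℝ} (hQ : ∀ i, 0 < Q i) :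
    ∃ ε ∈ Set.Ioo (0 : ℝ) 1, ∀ i, ε * f i ≤ Q i := by
  have hsmall : ∀ i, ∀ᶠ ε in 𝓝 (0 : ℝ), ε * f i < Q i := fun i =>
    (tendsto_id.mul_const (f i)).eventually_lt_const (by simpa using hQ i)
  have := (eventually_all.2 hsmall).filter_mono nhdsWithin_le_nhds
    |>.and (Ioo_mem_nhdsGT (zero_lt_one' ℝ))
  obtain ⟨ε, hlt, hε⟩ := this.exists
  exact ⟨ε, hε, fun i => (hlt i).le⟩

theorem pow_div_le_inv_mul_rpow_inv_pow {θ : ℝ} (hθ0 : 0 < θ) (hθ1 : θ ≤ 1) {k : ℕ}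
    (hk : k ≠ 0) (m : ℕ) : θ ^ (m / k) ≤ θ⁻¹ * (θ ^ (k : ℝ)⁻¹) ^ m := by
  have hρk : (θ ^ (k : ℝ)⁻¹) ^ k = θ := Real.rpow_inv_natCast_pow hθ0.le hk
  have hm : m ≤ k * (m / k + 1) := by
    rw [mul_add_one]; exact (Nat.lt_div_mul_add (Nat.pos_of_ne_zero hk)).le.trans_eq (by ring)
  rw [le_inv_mul_iff₀ hθ0]
  calc θ * θ ^ (m / k) = (θ ^ (k : ℝ)⁻¹) ^ (k * (m / k + 1)) := by
        rw [pow_mul, hρk, pow_succ']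
    _ ≤ (θ ^ (k : ℝ)⁻¹) ^ m := pow_le_pow_of_le_one (by positivity)
        (Real.rpow_le_one hθ0.le hθ1 (by positivity)) hm

namespace Matrix

variable {n : Type*} [Fintype n]

theorem abs_mulVec_apply_le_of_minorization (B : Matrix n n ℝ) {r l x : n → ℝ} {ε M : ℝ}
    (hB : ∀ i j, ε * (r i * l j) ≤ B i j) (hBr : B *ᵥ r = r) (hlx : l ⬝ᵥ x = 0)
    (hx : ∀ j, |x j| ≤ M * r j) (i : n) :
    |(B *ᵥ x) i| ≤ (1 - ε * (l ⬝ᵥ r)) * M * r i := by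
  -- subtracting `ε r lᵀ` does not change `B x`, and leaves a nonnegative matrix
  have hsplit : (B *ᵥ x) i = ∑ j, (B i j - ε * (r i * l j)) * x j := by
    have : ∑ j, ε * (r i * l j) * x j = ε * r i * (l ⬝ᵥ x) := by
      simp only [dotProduct, Finset.mul_sum]; ring_nf
    simp only [sub_mul, Finset.sum_sub_distrib, this, hlx, mul_zero, sub_zero]
    rfl
  have hri : (B *ᵥ r) i = r i := by rw [hBr]
  calc |(B *ᵥ x) i| ≤ ∑ j, (B i j - ε * (r i * l j)) * |x j| := by
        rw [hsplit]
        refine (abs_sum_le_sum_abs _ _).trans_eq (sum_congr rfl fun j _ => ?_)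
        rw [abs_mul, abs_of_nonneg (sub_nonneg.2 (hB i j))]
    _ ≤ ∑ j, (B i j - ε * (r i * l j)) * (M * r j) :=
        sum_le_sum fun j _ => mul_le_mul_of_nonneg_left (hx j) (sub_nonneg.2 (hB i j))
    _ = M * ((B *ᵥ r) i - ε * r i * (l ⬝ᵥ r)) := by
        simp only [mulVec, dotProduct, Finset.mul_sum, ← Finset.sum_sub_distrib]
        exact sum_congr rfl fun j _ => by ring
    _ = (1 - ε * (l ⬝ᵥ r)) * M * r i := by rw [hri]; ring

variable [DecidableEq n] {P : Matrix n n ℝ} {r l x : n → ℝ} {ε M : ℝ}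

theorem pow_mulVec_eq_self_s4 (hPr : P *ᵥ r = r) (m : ℕ) : P ^ m *ᵥ r = r := by
  induction m with
  | zero => exact one_mulVec r
  | succ m ih => rw [pow_succ, ← mulVec_mulVec, hPr, ih]

theorem vecMul_pow_eq_self_s4 (hlP : l ᵥ* P = l) (m : ℕ) : l ᵥ* P ^ m = l := by
  induction m with
  | zero => exact vecMul_one l
  | succ m ih => rw [pow_succ, ← vecMul_vecMul, ih, hlP]

theorem abs_pow_mulVec_apply_le_of_nonneg (hP : ∀ i j, 0 ≤ P i j) (hPr : P *ᵥ r = r)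
    (hx : ∀ j, |x j| ≤ M * r j) (m : ℕ) (i : n) : |(P ^ m *ᵥ x) i| ≤ M * r i := by
  simpa using abs_mulVec_apply_le_of_minorization (P ^ m) (l := 0) (ε := 0)
    (by simpa using pow_apply_nonneg hP m) (pow_mulVec_eq_self_s4 hPr m) (zero_dotProduct x) hx i

theorem abs_pow_mul_mulVec_apply_le {k : ℕ} (hPk : ∀ i j, ε * (r i * l j) ≤ (P ^ k) i j)
    (hPr : P *ᵥ r = r) (hlP : l ᵥ* P = l) (hlr : l ⬝ᵥ r = 1) (hlx : l ⬝ᵥ x = 0)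
    (hx : ∀ j, |x j| ≤ M * r j) (q : ℕ) (i : n) :
    |(P ^ (k * q) *ᵥ x) i| ≤ (1 - ε) ^ q * M * r i := by
  induction q generalizing i with
  | zero => simpa using hx i
  | succ q ih =>
    have hlx' : l ⬝ᵥ (P ^ (k * q) *ᵥ x) = 0 := by
      rw [dotProduct_mulVec, vecMul_pow_eq_self_s4 hlP, hlx]
    calc |(P ^ (k * (q + 1)) *ᵥ x) i| = |(P ^ k *ᵥ (P ^ (k * q) *ᵥ x)) i| := by
          rw [mul_add_one, add_comm, pow_add, mulVec_mulVec]
      _ ≤ (1 - ε * (l ⬝ᵥ r)) * ((1 - ε) ^ q * M) * r i :=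
          abs_mulVec_apply_le_of_minorization _ hPk (pow_mulVec_eq_self_s4 hPr k) hlx' ih i
      _ = (1 - ε) ^ (q + 1) * M * r i := by rw [hlr]; ring

theorem abs_pow_mulVec_apply_le_of_minorization (hP : ∀ i j, 0 ≤ P i j) {k : ℕ}
    (hPk : ∀ i j, ε * (r i * l j) ≤ (P ^ k) i j)
    (hPr : P *ᵥ r = r) (hlP : l ᵥ* P = l) (hlr : l ⬝ᵥ r = 1) (hlx : l ⬝ᵥ x = 0)
    (hx : ∀ j, |x j| ≤ M * r j) (m : ℕ) (i : n) :
    |(P ^ m *ᵥ x) i| ≤ (1 - ε) ^ (m / k) * M * r i := by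
  rw [← Nat.mod_add_div m k, pow_add, ← mulVec_mulVec, Nat.mod_add_div m k]
  exact abs_pow_mulVec_apply_le_of_nonneg hP hPr
    (abs_pow_mul_mulVec_apply_le hPk hPr hlP hlr hlx hx _) _ i

end Matrix

section WeightedBound

variable {n : Type*} [Fintype n] {r : n → ℝ}

theorem abs_apply_le_sum_inv_mul_norm_mul (hr : ∀ i, 0 < r i) (x : n → ℝ) (j : n) :
    |x j| ≤ (∑ i, (r i)⁻¹) * ‖x‖ * r j := by
  calc |x j| ≤ ‖x‖ := norm_le_pi_norm x j
    _ = (r j)⁻¹ * ‖x‖ * r j := by field_simp [(hr j).ne']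
    _ ≤ (∑ i, (r i)⁻¹) * ‖x‖ * r j := by
        gcongr
        · exact (hr j).le
        · exact single_le_sum (fun i _ => (inv_pos.2 (hr i)).le) (mem_univ j)

theorem norm_le_mul_norm_of_abs_le_mul {x : n → ℝ} {M : ℝ} (hM : 0 ≤ M)
    (hx : ∀ j, |x j| ≤ M * r j) : ‖x‖ ≤ M * ‖r‖ :=
  (pi_norm_le_iff_of_nonneg (by positivity)).2 fun j =>
    (hx j).trans (mul_le_mul_of_nonneg_left ((le_abs_self _).trans (norm_le_pi_norm r j)) hM)

end WeightedBound

section LinftyOpNorm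

attribute [local instance] Matrix.linftyOpNormedAddCommGroup

theorem Matrix.exists_norm_pow_mulVec_sub_dotProduct_smul_le {n : Type*} [Fintype n]
    [DecidableEq n] {P : Matrix n n ℝ} {r l : n → ℝ} {ε : ℝ} {k : ℕ} (hP : ∀ i j, 0 ≤ P i j)
    (hPk : ∀ i j, ε * (r i * l j) ≤ (P ^ k) i j) (hε0 : 0 ≤ ε) (hε1 : ε < 1) (hk : k ≠ 0)
    (hr : ∀ i, 0 < r i) (hPr : P *ᵥ r = r) (hlP : l ᵥ* P = l) (hlr : l ⬝ᵥ r = 1) :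
    ∃ C, 0 < C ∧ ∀ (v : n → ℝ) (m : ℕ),
      ‖P ^ m *ᵥ v - (l ⬝ᵥ v) • r‖ ≤ C * ((1 - ε) ^ (k : ℝ)⁻¹) ^ m * ‖v‖ := by
  have hθ : 0 < 1 - ε := sub_pos.2 hε1
  set Q : Matrix n n ℝ := 1 - vecMulVec r l
  set K := ∑ i, (r i)⁻¹
  have hK : 0 ≤ K := sum_nonneg fun i _ => (inv_pos.2 (hr i)).le
  set C := (1 - ε)⁻¹ * K * ‖Q‖ * ‖r‖
  refine ⟨C + 1, by positivity, fun v m => ?_⟩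
  have hQv : Q *ᵥ v = v - (l ⬝ᵥ v) • r := by
    rw [sub_mulVec, one_mulVec, vecMulVec_mulVec, op_smul_eq_smul]
  have hlQv : l ⬝ᵥ Q *ᵥ v = 0 := by
    rw [hQv, dotProduct_sub, dotProduct_smul, hlr, smul_eq_mul, mul_one, sub_self]
  have hbound := abs_pow_mulVec_apply_le_of_minorization hP hPk hPr hlP hlr hlQv
    (abs_apply_le_sum_inv_mul_norm_mul hr _) m
  calc ‖P ^ m *ᵥ v - (l ⬝ᵥ v) • r‖ = ‖P ^ m *ᵥ (Q *ᵥ v)‖ := by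
        rw [hQv, mulVec_sub, mulVec_smul, pow_mulVec_eq_self_s4 hPr]
    _ ≤ (1 - ε) ^ (m / k) * (K * ‖Q *ᵥ v‖) * ‖r‖ :=
        norm_le_mul_norm_of_abs_le_mul (by positivity) hbound
    _ ≤ (1 - ε)⁻¹ * ((1 - ε) ^ (k : ℝ)⁻¹) ^ m * (K * (‖Q‖ * ‖v‖)) * ‖r‖ := by
        gcongr
        · exact pow_div_le_inv_mul_rpow_inv_pow hθ (by linarith) hk m
        · exact linfty_opNorm_mulVec Q v
    _ = C * ((1 - ε) ^ (k : ℝ)⁻¹) ^ m * ‖v‖ := by ring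
    _ ≤ (C + 1) * ((1 - ε) ^ (k : ℝ)⁻¹) ^ m * ‖v‖ := by gcongr; linarith

end LinftyOpNorm

theorem rpf_power_method_convergence_rate_general
    {n : Type*} [Fintype n] [DecidableEq n]
    (A : Matrix n n ℝ) (hA : ∀ i j, 0 ≤ A i j)
    (hprim : ∃ k : ℕ, 1 ≤ k ∧ ∀ i j, 0 < (A ^ k) i j)
    (s : ℝ) (hs : 0 < s) (r l : n → ℝ)
    (hr : ∀ i, 0 < r i)
    (hright : A.mulVec r = s • r) (hleft : Matrix.vecMul l A = s • l)
    (hnorm : ∑ w, l w * r w = 1) :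
    ∃ (C : ℝ) (ρ : ℝ), 0 < C ∧ 0 ≤ ρ ∧ ρ < 1 ∧
      ∀ (v : n → ℝ) (m : ℕ),
        ‖(s ^ m)⁻¹ • (A ^ m).mulVec v - (∑ w, l w * v w) • r‖ ≤
          C * ρ ^ m * ‖v‖ := by
  obtain ⟨k, hk, hAk⟩ := hprim
  set P : Matrix n n ℝ := s⁻¹ • A
  have hPpow (m : ℕ) : P ^ m = (s ^ m)⁻¹ • A ^ m := by rw [smul_pow, inv_pow]
  have hPr : P *ᵥ r = r := by
    rw [smul_mulVec, hright, smul_smul, inv_mul_cancel₀ hs.ne', one_smul]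
  have hlP : l ᵥ* P = l := by
    rw [vecMul_smul, hleft, smul_smul, inv_mul_cancel₀ hs.ne', one_smul]
  obtain ⟨ε, ⟨hε0, hε1⟩, hPk⟩ :=
    exists_mem_Ioo_mul_le (Q := fun ij : n × n => (P ^ k) ij.1 ij.2)
      (f := fun ij => r ij.1 * l ij.2) fun ij => by
        rw [hPpow]; exact mul_pos (inv_pos.2 (pow_pos hs k)) (hAk ij.1 ij.2)
  obtain ⟨C, hC, hbound⟩ := exists_norm_pow_mulVec_sub_dotProduct_smul_le
    (fun i j => mul_nonneg (inv_nonneg.2 hs.le) (hA i j)) (fun i j => hPk (i, j)) hε0.le hε1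
    (by omega) hr hPr hlP hnorm
  refine ⟨C, (1 - ε) ^ (k : ℝ)⁻¹, hC, by positivity,
    Real.rpow_lt_one (by linarith) (by linarith) (by positivity), fun v m => ?_⟩
  rw [← smul_mulVec, ← hPpow]
  exact hbound v m

/-- **Ruelle–Perron–Frobenius, quantitative power-method convergence.**
With Perron data `(s, r, l)` for a primitive nonnegative matrix `A`, there are
`C > 0` and `0 ≤ ρ < 1` such that for every vector `v` and every `m`,
`‖s⁻ᵐ • (Aᵐ.mulVec v) − (∑ w, l w * v w) • r‖ ≤ C * ρ ^ m * ‖v‖`. -/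
theorem rpf_power_method_convergence_rate
    {n : Type*} [Fintype n] [Nonempty n] [DecidableEq n]
    (A : Matrix n n ℝ) (hA : ∀ i j, 0 ≤ A i j)
    (hprim : ∃ k : ℕ, 1 ≤ k ∧ ∀ i j, 0 < (A ^ k) i j)
    (s : ℝ) (hs : 0 < s) (r l : n → ℝ)
    (hr : ∀ i, 0 < r i) (hl : ∀ i, 0 < l i)
    (hright : A.mulVec r = s • r) (hleft : Matrix.vecMul l A = s • l)
    (hnorm : ∑ w, l w * r w = 1) :
    ∃ (C : ℝ) (ρ : ℝ), 0 < C ∧ 0 ≤ ρ ∧ ρ < 1 ∧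
      ∀ (v : n → ℝ) (m : ℕ),
        ‖(s ^ m)⁻¹ • (A ^ m).mulVec v - (∑ w, l w * v w) • r‖ ≤
          C * ρ ^ m * ‖v‖ :=
  rpf_power_method_convergence_rate_general A hA hprim s hs r l hr hright hleft hnorm
end

section
/- Let S be a finite nonempty set, G : S × S → ℝ a grammar taking values in {0,1}, ψ : S → ℝ, and let L(ψ) be the matrix with entries e^{ψ(w')}·G(w',w); assume L(ψ) is primitive with Perron data (s, r, l), and set M_{w',w} = e^{ψ(w')}·G(w',w)·r_w/(s·r_{w'}) and μ_w = l_w·r_w. Then there exist constants c₁, c₂ with 0 < c₁ ≤ c₂ such that for every n ≥ 0 and every sequence w_0, …, w_n with G(w_k, w_{k+1}) = 1 for all 0 ≤ k < n, c₁ ≤ (μ_{w_0} · ∏_{k=0}^{n−1} M_{w_k, w_{k+1}}) / exp(−(n+1)·log s + Σ_{k=0}^{n} ψ(w_k)) ≤ c₂. -/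
/-- **The Markov measure of the normalized chain satisfies the Gibbs bounds**
with topological pressure `P(ψ) = log s`: there are `0 < c₁ ≤ c₂` bounding,
uniformly over all admissible paths `w 0, …, w n`, the ratio of the path
probability `μ (w 0) * ∏_{k<n} M (w k) (w (k+1))` to
`exp (−(n+1) log s + ∑_{k ≤ n} ψ (w k))`. -/
theorem markov_measure_gibbs_bounds
    {S : Type*} [Fintype S] [Nonempty S] [DecidableEq S]
    (G : S → S → ℝ) (hG : ∀ w' w, G w' w = 0 ∨ G w' w = 1)
    (ψ : S → ℝ)
    (L : Matrix S S ℝ) (hL : ∀ w' w, L w' w = Real.exp (ψ w') * G w' w)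
    (hprim : ∃ k : ℕ, 1 ≤ k ∧ ∀ i j, 0 < (L ^ k) i j)
    (s : ℝ) (hs : 0 < s) (r l : S → ℝ)
    (hr : ∀ w, 0 < r w) (hl : ∀ w, 0 < l w)
    (hright : L.mulVec r = s • r) (hleft : Matrix.vecMul l L = s • l)
    (hnorm : ∑ w, l w * r w = 1)
    (M : Matrix S S ℝ)
    (hM : ∀ w' w, M w' w = Real.exp (ψ w') * G w' w * r w / (s * r w'))
    (μ : S → ℝ) (hμ : ∀ w, μ w = l w * r w) :
    ∃ c₁ c₂ : ℝ, 0 < c₁ ∧ c₁ ≤ c₂ ∧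
      ∀ (n : ℕ) (w : ℕ → S), (∀ k < n, G (w k) (w (k + 1)) = 1) →
        c₁ ≤ (μ (w 0) * ∏ k ∈ Finset.range n, M (w k) (w (k + 1))) /
              Real.exp (-((n : ℝ) + 1) * Real.log s +
                ∑ k ∈ Finset.range (n + 1), ψ (w k)) ∧
        (μ (w 0) * ∏ k ∈ Finset.range n, M (w k) (w (k + 1))) /
              Real.exp (-((n : ℝ) + 1) * Real.log s +
                ∑ k ∈ Finset.range (n + 1), ψ (w k)) ≤ c₂ := by

  classical
  have hne : (Finset.univ : Finset S).Nonempty := Finset.univ_nonempty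
  set f : S → ℝ := fun w => s * l w with hf
  set g : S → ℝ := fun w => r w / Real.exp (ψ w) with hg
  have hfpos : ∀ w, 0 < f w := fun w => mul_pos hs (hl w)
  have hgpos : ∀ w, 0 < g w := fun w => div_pos (hr w) (Real.exp_pos _)
  obtain ⟨w₀⟩ := (inferInstance : Nonempty S)
  refine ⟨(Finset.univ.inf' hne f) * (Finset.univ.inf' hne g),
          (Finset.univ.sup' hne f) * (Finset.univ.sup' hne g), ?_, ?_, ?_⟩
  · exact mul_pos ((Finset.lt_inf'_iff hne).2 fun w _ => hfpos w)
      ((Finset.lt_inf'_iff hne).2 fun w _ => hgpos w)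
  · exact mul_le_mul
      (le_trans (Finset.inf'_le f (Finset.mem_univ w₀)) (Finset.le_sup' f (Finset.mem_univ w₀)))
      (le_trans (Finset.inf'_le g (Finset.mem_univ w₀)) (Finset.le_sup' g (Finset.mem_univ w₀)))
      (le_of_lt ((Finset.lt_inf'_iff hne).2 fun w _ => hgpos w))
      (le_of_lt (lt_of_lt_of_le ((Finset.lt_inf'_iff hne).2 fun w _ => hfpos w)
        (le_trans (Finset.inf'_le f (Finset.mem_univ w₀)) (Finset.le_sup' f (Finset.mem_univ w₀)))))
  · intro n w hw
    have hs0 : s ≠ 0 := ne_of_gt hs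
    have key : (μ (w 0) * ∏ k ∈ Finset.range n, M (w k) (w (k + 1))) /
          Real.exp (-((n : ℝ) + 1) * Real.log s +
            ∑ k ∈ Finset.range (n + 1), ψ (w k)) = f (w 0) * g (w n) := by
      have hprod : ∏ k ∈ Finset.range n, M (w k) (w (k + 1))
          = Real.exp (∑ k ∈ Finset.range n, ψ (w k)) * r (w n) / (s ^ n * r (w 0)) := by
        induction n with
        | zero => simp [div_self (hr (w 0)).ne']
        | succ m ih =>
          rw [Finset.prod_range_succ, ih (fun k hk => hw k (by omega)),
            Finset.sum_range_succ, hM, hw m (by omega), Real.exp_add]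
          field_simp [(hr (w m)).ne', (hr (w 0)).ne', hs0]
          ring
      have hexp : Real.exp (-((n : ℝ) + 1) * Real.log s +
            ∑ k ∈ Finset.range (n + 1), ψ (w k))
          = Real.exp (∑ k ∈ Finset.range n, ψ (w k)) * Real.exp (ψ (w n)) / s ^ (n + 1) := by
        rw [Real.exp_add, Finset.sum_range_succ, Real.exp_add]
        have h1 : Real.exp (-((n : ℝ) + 1) * Real.log s) = (s ^ (n + 1))⁻¹ := by
          rw [neg_mul, Real.exp_neg]
          congr 1
          have : ((n : ℝ) + 1) * Real.log s = ((n + 1 : ℕ) : ℝ) * Real.log s := by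
            push_cast; ring
          rw [this, Real.exp_nat_mul, Real.exp_log hs]
        rw [h1]; ring
      rw [hprod, hexp, hμ, hf, hg]
      have h2 : Real.exp (∑ k ∈ Finset.range n, ψ (w k)) ≠ 0 := Real.exp_ne_zero _
      have h3 : Real.exp (ψ (w n)) ≠ 0 := Real.exp_ne_zero _
      have h4 : s ^ n ≠ 0 := pow_ne_zero _ hs0
      have h5 : r (w 0) ≠ 0 := ne_of_gt (hr (w 0))
      field_simp
      ring
    rw [key]
    constructor
    · exact mul_le_mul (Finset.inf'_le f (Finset.mem_univ _))
        (Finset.inf'_le g (Finset.mem_univ _))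
        (le_of_lt ((Finset.lt_inf'_iff hne).2 fun w _ => hgpos w))
        (le_of_lt (hfpos _))
    · exact mul_le_mul (Finset.le_sup' f (Finset.mem_univ (w 0)))
        (Finset.le_sup' g (Finset.mem_univ (w n)))
        (le_of_lt (hgpos (w n))) (le_of_lt (lt_of_lt_of_le (hfpos (w 0))
          (Finset.le_sup' f (Finset.mem_univ (w 0)))))
end

section
/- Let S be a finite nonempty set, G : S × S → ℝ a grammar taking values in {0,1}, ψ : S → ℝ, and let L(ψ) have entries e^{ψ(w')}·G(w',w); assume L(ψ) is primitive with Perron data (s, r, l), and set M_{w',w} = e^{ψ(w')}·G(w',w)·r_w/(s·r_{w'}) and μ_w = l_w·r_w. Then the entropy rate of the stationary Markov chain (M, μ) satisfies −Σ_{w,w'} μ_w · M_{w,w'} · log M_{w,w'} = log s − Σ_w μ_w · ψ(w) (with the convention that a summand vanishes when M_{w,w'} = 0). -/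
/-- **Entropy of the Gibbs chain: `h[μ_ψ] = P(ψ) − μ_ψ(ψ)`.**
For the normalized chain `M` with stationary measure `μ_w = l_w * r_w`, the
entropy rate `−∑_{w,w'} μ w * M w w' * log (M w w')` equals
`log s − ∑_w μ w * ψ w`.  (In Lean, `Real.log 0 = 0`, so summands with
`M w w' = 0` vanish automatically, matching the stated convention.) -/
theorem gibbs_chain_entropy_formula
    {S : Type*} [Fintype S] [Nonempty S] [DecidableEq S]
    (G : S → S → ℝ) (hG : ∀ w' w, G w' w = 0 ∨ G w' w = 1)
    (ψ : S → ℝ)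
    (L : Matrix S S ℝ) (hL : ∀ w' w, L w' w = Real.exp (ψ w') * G w' w)
    (hprim : ∃ k : ℕ, 1 ≤ k ∧ ∀ i j, 0 < (L ^ k) i j)
    (s : ℝ) (hs : 0 < s) (r l : S → ℝ)
    (hr : ∀ w, 0 < r w) (hl : ∀ w, 0 < l w)
    (hright : L.mulVec r = s • r) (hleft : Matrix.vecMul l L = s • l)
    (hnorm : ∑ w, l w * r w = 1)
    (M : Matrix S S ℝ)
    (hM : ∀ w' w, M w' w = Real.exp (ψ w') * G w' w * r w / (s * r w'))
    (μ : S → ℝ) (hμ : ∀ w, μ w = l w * r w) :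
    -∑ w, ∑ w', μ w * M w w' * Real.log (M w w') =
      Real.log s - ∑ w, μ w * ψ w := by
  have hrpos : ∀ w, r w ≠ 0 := fun w => (hr w).ne'
  have hμsum : ∑ w, μ w = 1 := by
    rw [← hnorm]; exact Finset.sum_congr rfl fun w _ => hμ w
  have hrow : ∀ w, ∑ w', M w w' = 1 := by
    intro w
    have h1 : ∑ w', L w w' * r w' = s * r w := by
      have := congrFun hright w
      simpa [Matrix.mulVec, dotProduct, smul_eq_mul] using this
    have h2 : ∑ w', M w w' = (∑ w', L w w' * r w') / (s * r w) := by
      rw [Finset.sum_div]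
      exact Finset.sum_congr rfl fun w' _ => by rw [hM, hL]
    rw [h2, h1, div_self (mul_ne_zero hs.ne' (hrpos w))]
  have hstat : ∀ w', ∑ w, μ w * M w w' = μ w' := by
    intro w'
    have h1 : ∑ w, l w * L w w' = s * l w' := by
      have := congrFun hleft w'
      simpa [Matrix.vecMul, dotProduct, smul_eq_mul] using this
    have h2 : ∑ w, μ w * M w w' = (∑ w, l w * L w w') * r w' / s := by
      rw [Finset.sum_mul, Finset.sum_div]
      refine Finset.sum_congr rfl fun w _ => ?_
      rw [hM, hL, hμ]
      field_simp [hrpos w, hs.ne']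
    rw [h2, h1, hμ]
    field_simp
  have key : ∀ w w', μ w * M w w' * Real.log (M w w') =
      μ w * M w w' * ψ w + μ w * M w w' * Real.log (r w')
        - μ w * M w w' * Real.log s - μ w * M w w' * Real.log (r w) := by
    intro w w'
    rcases hG w w' with h | h
    · simp [hM, h]
    · have hMv : M w w' = Real.exp (ψ w) * r w' / (s * r w) := by
        rw [hM, h]; ring
      rw [hMv, Real.log_div (mul_ne_zero (Real.exp_ne_zero _) (hrpos w')) (mul_ne_zero hs.ne' (hrpos w)),
          Real.log_mul (Real.exp_ne_zero _) (hrpos w'),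
          Real.log_mul hs.ne' (hrpos w), Real.log_exp]
      ring
  have hA : ∑ w, ∑ w', μ w * M w w' * ψ w = ∑ w, μ w * ψ w := by
    refine Finset.sum_congr rfl fun w _ => ?_
    rw [show (∑ w', μ w * M w w' * ψ w) = (μ w * ψ w) * ∑ w', M w w' from by
      rw [Finset.mul_sum]; exact Finset.sum_congr rfl fun _ _ => by ring]
    rw [hrow w, mul_one]
  have hB : ∑ w, ∑ w', μ w * M w w' * Real.log (r w')
      = ∑ w, μ w * Real.log (r w) := by
    rw [Finset.sum_comm]
    refine Finset.sum_congr rfl fun w' _ => ?_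
    rw [show (∑ w, μ w * M w w' * Real.log (r w'))
        = (∑ w, μ w * M w w') * Real.log (r w') from by rw [Finset.sum_mul]]
    rw [hstat w']
  have hC : ∑ w, ∑ w', μ w * M w w' * Real.log s = Real.log s := by
    have : ∀ w, ∑ w', μ w * M w w' * Real.log s = μ w * Real.log s := by
      intro w
      rw [show (∑ w', μ w * M w w' * Real.log s)
          = (μ w * Real.log s) * ∑ w', M w w' from by
        rw [Finset.mul_sum]; exact Finset.sum_congr rfl fun _ _ => by ring]
      rw [hrow w, mul_one]
    rw [Finset.sum_congr rfl fun w _ => this w, ← Finset.sum_mul, hμsum, one_mul]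
  have hD : ∑ w, ∑ w', μ w * M w w' * Real.log (r w)
      = ∑ w, μ w * Real.log (r w) := by
    refine Finset.sum_congr rfl fun w _ => ?_
    rw [show (∑ w', μ w * M w w' * Real.log (r w))
        = (μ w * Real.log (r w)) * ∑ w', M w w' from by
      rw [Finset.mul_sum]; exact Finset.sum_congr rfl fun _ _ => by ring]
    rw [hrow w, mul_one]
  have hsplit : ∑ w, ∑ w', μ w * M w w' * Real.log (M w w')
      = (∑ w, ∑ w', μ w * M w w' * ψ w)
        + (∑ w, ∑ w', μ w * M w w' * Real.log (r w'))
        - (∑ w, ∑ w', μ w * M w w' * Real.log s)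
        - (∑ w, ∑ w', μ w * M w w' * Real.log (r w)) := by
    calc ∑ w, ∑ w', μ w * M w w' * Real.log (M w w')
        = ∑ w, ∑ w', (μ w * M w w' * ψ w + μ w * M w w' * Real.log (r w')
            - μ w * M w w' * Real.log s - μ w * M w w' * Real.log (r w)) :=
          Finset.sum_congr rfl fun w _ => Finset.sum_congr rfl fun w' _ => key w w'
      _ = _ := by simp [Finset.sum_add_distrib, Finset.sum_sub_distrib]
  rw [hsplit, hA, hB, hC, hD]
  ring
end

section
/- Let S be a finite nonempty set, G : S × S → ℝ a grammar taking values in {0,1}, ψ : S → ℝ, and let L(ψ) have entries e^{ψ(w')}·G(w',w); assume s > 0 and r has strictly positive entries with L(ψ)·r = s·r, and set M_{w',w} = e^{ψ(w')}·G(w',w)·r_w/(s·r_{w'}). Let Q be any stochastic matrix on S (nonnegative entries, rows summing to 1) such that Q_{w,w'} > 0 implies G(w,w') = 1, and let π be a probability vector with πᵀ·Q = πᵀ. Then −Σ_{w,w'} π_w · Q_{w,w'} · log M_{w,w'} = log s − Σ_w π_w · ψ(w) (summands with Q_{w,w'} = 0 being omitted). -/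
/-- **Cross-entropy identity underlying `d(ν, μ_ψ) = P(ψ) − ν(ψ) − h(ν)`.**
For any stochastic matrix `Q` compatible with the grammar and any stationary
probability vector `π` of `Q`, one has
`−∑_{w,w'} π w * Q w w' * log (M w w') = log s − ∑_w π w * ψ w`.
(In Lean, `Real.log 0 = 0`, so summands with `Q w w' = 0` vanish since the
coefficient is zero, matching the convention of omitting them.) -/
theorem cross_entropy_identity
    {S : Type*} [Fintype S] [Nonempty S] [DecidableEq S]
    (G : S → S → ℝ) (hG : ∀ w' w, G w' w = 0 ∨ G w' w = 1)
    (ψ : S → ℝ)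
    (L : Matrix S S ℝ) (hL : ∀ w' w, L w' w = Real.exp (ψ w') * G w' w)
    (s : ℝ) (hs : 0 < s) (r : S → ℝ) (hr : ∀ w, 0 < r w)
    (heig : L.mulVec r = s • r)
    (M : Matrix S S ℝ)
    (hM : ∀ w' w, M w' w = Real.exp (ψ w') * G w' w * r w / (s * r w'))
    (Q : Matrix S S ℝ) (hQnn : ∀ w w', 0 ≤ Q w w')
    (hQrow : ∀ w, ∑ w', Q w w' = 1)
    (hQG : ∀ w w', 0 < Q w w' → G w w' = 1)
    (π : S → ℝ) (hπnn : ∀ w, 0 ≤ π w) (hπsum : ∑ w, π w = 1)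
    (hπstat : Matrix.vecMul π Q = π) :
    -∑ w, ∑ w', π w * Q w w' * Real.log (M w w') =
      Real.log s - ∑ w, π w * ψ w := by
  have key : ∀ w w', π w * Q w w' * Real.log (M w w') =
      π w * Q w w' * ψ w + π w * Q w w' * Real.log (r w')
        - π w * Q w w' * Real.log s - π w * Q w w' * Real.log (r w) := by
    intro w w'
    rcases eq_or_lt_of_le (hQnn w w') with h | h
    · simp [← h]
    · have hG1 := hQG w w' h
      have hMeq : M w w' = Real.exp (ψ w) * r w' / (s * r w) := by
        rw [hM, hG1]; ring
      rw [hMeq, Real.log_div (mul_pos (Real.exp_pos _) (hr w')).ne' (mul_pos hs (hr w)).ne',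
        Real.log_mul (Real.exp_ne_zero _) (ne_of_gt (hr w')), Real.log_exp,
        Real.log_mul (ne_of_gt hs) (ne_of_gt (hr w))]
      ring
  have hrowf : ∀ (w : S) (c : ℝ), ∑ w', π w * Q w w' * c = π w * c := by
    intro w c
    rw [← Finset.sum_mul, ← Finset.mul_sum, hQrow, mul_one]
  have hstat : ∀ w', ∑ w, π w * Q w w' = π w' := by
    intro w'
    have := congrFun hπstat w'
    simpa [Matrix.vecMul, dotProduct] using this
  have A : ∑ w, ∑ w', π w * Q w w' * ψ w = ∑ w, π w * ψ w :=
    Finset.sum_congr rfl fun w _ => hrowf w (ψ w)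
  have B : ∑ w, ∑ w', π w * Q w w' * Real.log s = Real.log s := by
    rw [Finset.sum_congr rfl fun w _ => hrowf w (Real.log s),
      ← Finset.sum_mul, hπsum, one_mul]
  have C : ∑ w, ∑ w', π w * Q w w' * Real.log (r w) = ∑ w, π w * Real.log (r w) :=
    Finset.sum_congr rfl fun w _ => hrowf w (Real.log (r w))
  have D : ∑ w, ∑ w', π w * Q w w' * Real.log (r w') = ∑ w, π w * Real.log (r w) := by
    rw [Finset.sum_comm]
    exact Finset.sum_congr rfl fun w' _ => by
      rw [← Finset.sum_mul, hstat]
  simp only [key, Finset.sum_sub_distrib, Finset.sum_add_distrib, A, B, C, D]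
  ring
end

section
/- Let S be a finite nonempty set, G : S × S → ℝ a grammar taking values in {0,1}, ψ : S → ℝ, and let L(ψ) have entries e^{ψ(w')}·G(w',w); assume s > 0 and r has strictly positive entries with L(ψ)·r = s·r, and set M_{w',w} = e^{ψ(w')}·G(w',w)·r_w/(s·r_{w'}). Let Q be any stochastic matrix on S such that Q_{w,w'} > 0 implies G(w,w') = 1, and let π be a probability vector with πᵀ·Q = πᵀ. Then −Σ_{w,w'} π_w · Q_{w,w'} · log Q_{w,w'} + Σ_w π_w · ψ(w) ≤ log s, and equality holds if and only if Q_{w,w'} = M_{w,w'} for every w with π_w > 0 and every w'. -/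
/-- **Variational principle for the topological pressure over stationary
Markov chains.**  For any stochastic matrix `Q` compatible with the grammar
and any stationary probability vector `π` of `Q`, entropy rate plus average
energy is at most `log s`, with equality iff `Q` agrees with the normalized
Gibbs chain `M` on the support of `π`. -/
theorem pressure_variational_principle_markov
    {S : Type*} [Fintype S] [Nonempty S] [DecidableEq S]
    (G : S → S → ℝ) (hG : ∀ w' w, G w' w = 0 ∨ G w' w = 1)
    (ψ : S → ℝ)
    (L : Matrix S S ℝ) (hL : ∀ w' w, L w' w = Real.exp (ψ w') * G w' w)
    (s : ℝ) (hs : 0 < s) (r : S → ℝ) (hr : ∀ w, 0 < r w)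
    (heig : L.mulVec r = s • r)
    (M : Matrix S S ℝ)
    (hM : ∀ w' w, M w' w = Real.exp (ψ w') * G w' w * r w / (s * r w'))
    (Q : Matrix S S ℝ) (hQnn : ∀ w w', 0 ≤ Q w w')
    (hQrow : ∀ w, ∑ w', Q w w' = 1)
    (hQG : ∀ w w', 0 < Q w w' → G w w' = 1)
    (π : S → ℝ) (hπnn : ∀ w, 0 ≤ π w) (hπsum : ∑ w, π w = 1)
    (hπstat : Matrix.vecMul π Q = π) :
    (-∑ w, ∑ w', π w * Q w w' * Real.log (Q w w')) + ∑ w, π w * ψ w ≤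
        Real.log s ∧
      (((-∑ w, ∑ w', π w * Q w w' * Real.log (Q w w')) + ∑ w, π w * ψ w =
          Real.log s) ↔
        ∀ w, 0 < π w → ∀ w', Q w w' = M w w') := by
  classical
  -- Basic positivity facts
  have hMnn : ∀ w w', 0 ≤ M w w' := by
    intro w w'
    rw [hM]
    have hGnn : 0 ≤ G w w' := by rcases hG w w' with h | h <;> rw [h] <;> norm_num
    have h1 := hr w; have h2 := hr w'
    positivity
  -- M is row-stochastic
  have hMrow : ∀ w, ∑ w', M w w' = 1 := by
    intro w
    have h1 : ∑ w', M w w' = (∑ w', L w w' * r w') / (s * r w) := by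
      rw [Finset.sum_div]
      refine Finset.sum_congr rfl fun w' _ => ?_
      rw [hM, hL]
    have h2 : ∑ w', L w w' * r w' = s * r w := by
      have := congrFun heig w
      simpa [Matrix.mulVec, dotProduct] using this
    rw [h1, h2]
    have h3 : s * r w ≠ 0 := by have := hr w; positivity
    exact div_self h3
  -- If Q w w' > 0 then M w w' > 0
  have hQMpos : ∀ w w', 0 < Q w w' → 0 < M w w' := by
    intro w w' hq
    rw [hM, hQG w w' hq]
    have := hr w; have := hr w'
    positivity
  -- value of log M on support of Q
  have hlogMval : ∀ w w', 0 < Q w w' →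
      Real.log (M w w') = ψ w + Real.log (r w') - Real.log s - Real.log (r w) := by
    intro w w' hq
    have hrw := hr w; have hrw' := hr w'
    rw [hM, hQG w w' hq]
    rw [mul_one]
    rw [Real.log_div (by positivity) (by positivity),
      Real.log_mul (Real.exp_ne_zero _) (ne_of_gt (hr w')),
      Real.log_mul (ne_of_gt hs) (ne_of_gt (hr w)), Real.log_exp]
    ring
  -- the key identity: sum of π Q log M
  have hlogM : ∑ w, ∑ w', π w * Q w w' * Real.log (M w w')
      = ∑ w, π w * ψ w - Real.log s := by
    have hterm : ∀ w w', π w * Q w w' * Real.log (M w w')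
        = π w * Q w w' * (ψ w + Real.log (r w') - Real.log s - Real.log (r w)) := by
      intro w w'
      rcases eq_or_lt_of_le (hQnn w w') with hq | hq
      · rw [← hq]; ring
      · rw [hlogMval w w' hq]
    have hstat : ∀ w', ∑ w, π w * Q w w' = π w' := by
      intro w'
      have := congrFun hπstat w'
      simpa [Matrix.vecMul, dotProduct] using this
    calc ∑ w, ∑ w', π w * Q w w' * Real.log (M w w')
        = ∑ w, ∑ w', π w * Q w w' * (ψ w + Real.log (r w') - Real.log s - Real.log (r w)) := by
          exact Finset.sum_congr rfl fun w _ => Finset.sum_congr rfl fun w' _ => hterm w w'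
      _ = ∑ w, ∑ w', (π w * Q w w' * ψ w + π w * Q w w' * Real.log (r w')
            - π w * Q w w' * Real.log s - π w * Q w w' * Real.log (r w)) := by
          refine Finset.sum_congr rfl fun w _ => Finset.sum_congr rfl fun w' _ => by ring
      _ = ∑ w, ((π w * ψ w) * (∑ w', Q w w') + ∑ w', π w * Q w w' * Real.log (r w')
            - (π w * Real.log s) * (∑ w', Q w w') - (π w * Real.log (r w)) * (∑ w', Q w w')) := by
          refine Finset.sum_congr rfl fun w _ => ?_
          have e1 : ∑ w', π w * Q w w' * ψ w = (π w * ψ w) * ∑ w', Q w w' := by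
            rw [Finset.mul_sum]; exact Finset.sum_congr rfl fun w' _ => by ring
          have e3 : ∑ w', π w * Q w w' * Real.log s = (π w * Real.log s) * ∑ w', Q w w' := by
            rw [Finset.mul_sum]; exact Finset.sum_congr rfl fun w' _ => by ring
          have e4 : ∑ w', π w * Q w w' * Real.log (r w) = (π w * Real.log (r w)) * ∑ w', Q w w' := by
            rw [Finset.mul_sum]; exact Finset.sum_congr rfl fun w' _ => by ring
          rw [Finset.sum_sub_distrib, Finset.sum_sub_distrib, Finset.sum_add_distrib, e1, e3, e4]
      _ = ∑ w, (π w * ψ w + (∑ w', π w * Q w w' * Real.log (r w'))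
            - π w * Real.log s - π w * Real.log (r w)) := by
          refine Finset.sum_congr rfl fun w _ => by rw [hQrow w]; ring
      _ = ∑ w, π w * ψ w + (∑ w, ∑ w', π w * Q w w' * Real.log (r w'))
            - (∑ w, π w) * Real.log s - ∑ w, π w * Real.log (r w) := by
          rw [Finset.sum_sub_distrib, Finset.sum_sub_distrib, Finset.sum_add_distrib,
            Finset.sum_mul]
      _ = ∑ w, π w * ψ w - Real.log s := by
          have : ∑ w, ∑ w', π w * Q w w' * Real.log (r w')
              = ∑ w, π w * Real.log (r w) := by
            rw [Finset.sum_comm]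
            refine Finset.sum_congr rfl fun w' _ => ?_
            rw [← Finset.sum_mul, hstat w']
          rw [this, hπsum]; ring
  -- the relative-entropy form of the difference
  have hT : (-∑ w, ∑ w', π w * Q w w' * Real.log (Q w w')) + ∑ w, π w * ψ w - Real.log s
      = ∑ w, π w * ∑ w', Q w w' * (Real.log (M w w') - Real.log (Q w w')) := by
    have : ∑ w, π w * ∑ w', Q w w' * (Real.log (M w w') - Real.log (Q w w'))
        = (∑ w, ∑ w', π w * Q w w' * Real.log (M w w'))
          - ∑ w, ∑ w', π w * Q w w' * Real.log (Q w w') := by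
      rw [← Finset.sum_sub_distrib]
      refine Finset.sum_congr rfl fun w _ => ?_
      rw [Finset.mul_sum, ← Finset.sum_sub_distrib]
      refine Finset.sum_congr rfl fun w' _ => by ring
    rw [this, hlogM]; ring
  -- termwise bound: Q * (log M - log Q) ≤ M - Q
  have hterm_le : ∀ w w',
      Q w w' * (Real.log (M w w') - Real.log (Q w w')) ≤ M w w' - Q w w' := by
    intro w w'
    rcases eq_or_lt_of_le (hQnn w w') with hq | hq
    · rw [← hq]; simpa using hMnn w w'
    · have hm := hQMpos w w' hq
      have hdiv : 0 < M w w' / Q w w' := div_pos hm hq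
      have hlog : Real.log (M w w' / Q w w') ≤ M w w' / Q w w' - 1 :=
        Real.log_le_sub_one_of_pos hdiv
      rw [Real.log_div (ne_of_gt hm) (ne_of_gt hq)] at hlog
      have := mul_le_mul_of_nonneg_left hlog (le_of_lt hq)
      calc Q w w' * (Real.log (M w w') - Real.log (Q w w'))
          ≤ Q w w' * (M w w' / Q w w' - 1) := this
        _ = M w w' - Q w w' := by field_simp
  -- row sums of the bound are zero
  have hrowzero : ∀ w, ∑ w', (M w w' - Q w w') = 0 := by
    intro w
    rw [Finset.sum_sub_distrib, hMrow w, hQrow w]; ring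
  -- each row entropy term is ≤ 0
  have hrow_le : ∀ w, ∑ w', Q w w' * (Real.log (M w w') - Real.log (Q w w')) ≤ 0 := by
    intro w
    calc ∑ w', Q w w' * (Real.log (M w w') - Real.log (Q w w'))
        ≤ ∑ w', (M w w' - Q w w') := Finset.sum_le_sum fun w' _ => hterm_le w w'
      _ = 0 := hrowzero w
  have hT_le : ∑ w, π w * ∑ w', Q w w' * (Real.log (M w w') - Real.log (Q w w')) ≤ 0 := by
    have : ∀ w ∈ Finset.univ,
        π w * ∑ w', Q w w' * (Real.log (M w w') - Real.log (Q w w')) ≤ 0 :=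
      fun w _ => mul_nonpos_of_nonneg_of_nonpos (hπnn w) (hrow_le w)
    calc ∑ w, π w * ∑ w', Q w w' * (Real.log (M w w') - Real.log (Q w w'))
        ≤ ∑ _w : S, (0:ℝ) := Finset.sum_le_sum fun w hw => by simpa using this w hw
      _ = 0 := by simp
  constructor
  · linarith [hT, hT_le]
  constructor
  · -- equality implies Q = M on support of π
    intro heq
    have hT0 : ∑ w, π w * ∑ w', Q w w' * (Real.log (M w w') - Real.log (Q w w')) = 0 := by
      linarith [hT]
    -- each summand is zero
    have hall : ∀ w, π w * ∑ w', Q w w' * (Real.log (M w w') - Real.log (Q w w')) = 0 := by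
      intro w
      by_contra hne
      have hlt : π w * ∑ w', Q w w' * (Real.log (M w w') - Real.log (Q w w')) < 0 :=
        lt_of_le_of_ne (mul_nonpos_of_nonneg_of_nonpos (hπnn w) (hrow_le w)) hne
      have : ∑ w, π w * ∑ w', Q w w' * (Real.log (M w w') - Real.log (Q w w')) < 0 := by
        calc ∑ w, π w * ∑ w', Q w w' * (Real.log (M w w') - Real.log (Q w w'))
            < ∑ _w : S, (0:ℝ) := by
              refine Finset.sum_lt_sum (fun v _ =>
                mul_nonpos_of_nonneg_of_nonpos (hπnn v) (hrow_le v)) ⟨w, Finset.mem_univ w, hlt⟩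
          _ = 0 := by simp
      linarith
    intro w hπw w'
    have hrow0 : ∑ w', Q w w' * (Real.log (M w w') - Real.log (Q w w')) = 0 := by
      have := hall w
      rcases mul_eq_zero.mp this with h | h
      · exact absurd h (ne_of_gt hπw)
      · exact h
    -- termwise equality with M - Q
    have htermeq : ∀ w', Q w w' * (Real.log (M w w') - Real.log (Q w w')) = M w w' - Q w w' := by
      intro v
      by_contra hne
      have hlt : Q w v * (Real.log (M w v) - Real.log (Q w v)) < M w v - Q w v :=
        lt_of_le_of_ne (hterm_le w v) hne
      have : ∑ w', Q w w' * (Real.log (M w w') - Real.log (Q w w'))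
          < ∑ w', (M w w' - Q w w') :=
        Finset.sum_lt_sum (fun v _ => hterm_le w v) ⟨v, Finset.mem_univ v, hlt⟩
      rw [hrow0, hrowzero w] at this
      exact lt_irrefl 0 this
    have := htermeq w'
    rcases eq_or_lt_of_le (hQnn w w') with hq | hq
    · -- Q = 0 forces M = 0
      rw [← hq] at this ⊢
      simpa using this
    · -- Q > 0 forces log(M/Q) = M/Q - 1, hence M/Q = 1
      have hm := hQMpos w w' hq
      by_contra hne
      have hratio : M w w' / Q w w' ≠ 1 := by
        intro h1
        exact hne ((div_eq_one_iff_eq (ne_of_gt hq)).mp h1).symm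
      have hstrict : Real.log (M w w' / Q w w') < M w w' / Q w w' - 1 :=
        Real.log_lt_sub_one_of_pos (div_pos hm hq) hratio
      rw [Real.log_div (ne_of_gt hm) (ne_of_gt hq)] at hstrict
      have h2 := mul_lt_mul_of_pos_left hstrict hq
      have h3 : Q w w' * (M w w' / Q w w' - 1) = M w w' - Q w w' := by field_simp
      rw [h3, this] at h2
      exact lt_irrefl _ h2
  · -- converse: Q = M on support of π implies equality
    intro hQeqM
    have : ∑ w, π w * ∑ w', Q w w' * (Real.log (M w w') - Real.log (Q w w')) = 0 := by
      refine Finset.sum_eq_zero fun w _ => ?_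
      rcases eq_or_lt_of_le (hπnn w) with hp | hp
      · rw [← hp, zero_mul]
      · have : ∑ w', Q w w' * (Real.log (M w w') - Real.log (Q w w')) = 0 := by
          refine Finset.sum_eq_zero fun w' _ => ?_
          rw [hQeqM w hp w']; ring
        rw [this, mul_zero]
    linarith [hT]
end

section
/- Let S be a finite nonempty set, G : S × S → ℝ a grammar taking values in {0,1}, and ψ, φ : S → ℝ. For t ∈ ℝ let L(t) be the matrix with entries L(t)_{w',w} = e^{ψ(w') + t·φ(w')}·G(w',w). Suppose s : ℝ → ℝ and r : ℝ → (S → ℝ) are differentiable at 0, s(0) > 0, L(t)·r(t) = s(t)·r(t) for all t in a neighborhood of 0, and l : S → ℝ satisfies lᵀ·L(0) = s(0)·lᵀ with Σ_w l_w·r(0)_w = 1. Then the derivative of t ↦ log s(t) at t = 0 equals Σ_w φ(w)·l_w·r(0)_w. -/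
/-!
Differentiate the pairing `l ⬝ᵥ (L t *ᵥ r t) = s t * (l ⬝ᵥ r t)` at `t = 0`. Since `l` is a left
eigenvector of `L 0`, the terms containing `r' 0` cancel on both sides (first-order perturbation of
an eigenvalue), leaving `s' 0 * (l ⬝ᵥ r 0) = l ⬝ᵥ (L' 0 *ᵥ r 0)`. For the RPF family, `L' 0` is
`L 0` with row `w'` scaled by `φ w'`, so the right side is `s 0 * ∑ φ w * l w * r 0 w`; divide by
`s 0` to get `(log s)' 0`.
-/

open Matrix

section

variable {m n : Type*} [Fintype n]

theorem HasDerivAt.const_dotProduct {v : ℝ → n → ℝ} {v' : n → ℝ} {x : ℝ}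
    (l : n → ℝ) (hv : HasDerivAt v v' x) :
    HasDerivAt (fun t => l ⬝ᵥ v t) (l ⬝ᵥ v') x :=
  HasDerivAt.fun_sum fun j _ => ((hasDerivAt_pi.mp hv) j).const_mul (l j)

theorem hasDerivAt_mulVec {L : ℝ → Matrix m n ℝ} {L' : Matrix m n ℝ}
    {v : ℝ → n → ℝ} {v' : n → ℝ} {x : ℝ}
    (hL : ∀ i j, HasDerivAt (fun t => L t i j) (L' i j) x) (hv : HasDerivAt v v' x) :
    HasDerivAt (fun t => L t *ᵥ v t) (L' *ᵥ v x + L x *ᵥ v') x := by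
  refine hasDerivAt_pi.mpr fun i => ?_
  have hvj := hasDerivAt_pi.mp hv
  exact (HasDerivAt.fun_sum fun j (_ : j ∈ Finset.univ) => (hL i j).fun_mul (hvj j)).congr_deriv
    Finset.sum_add_distrib

theorem eigenvalue_deriv_mul_dotProduct {L : ℝ → Matrix n n ℝ} {L' : Matrix n n ℝ}
    {r : ℝ → n → ℝ} {r' : n → ℝ} {s : ℝ → ℝ} {s' x : ℝ} {l : n → ℝ}
    (hL : ∀ i j, HasDerivAt (fun t => L t i j) (L' i j) x) (hr : HasDerivAt r r' x)
    (hs : HasDerivAt s s' x) (heig : ∀ᶠ t in nhds x, L t *ᵥ r t = s t • r t)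
    (hleft : l ᵥ* L x = s x • l) :
    s' * (l ⬝ᵥ r x) = l ⬝ᵥ (L' *ᵥ r x) := by
  have hpair : HasDerivAt (fun t => l ⬝ᵥ (L t *ᵥ r t))
      (l ⬝ᵥ (L' *ᵥ r x) + s x * (l ⬝ᵥ r')) x := by
    convert (hasDerivAt_mulVec hL hr).const_dotProduct l using 1
    rw [dotProduct_add, dotProduct_mulVec l (L x), hleft, smul_dotProduct, smul_eq_mul]
  have hscaled : HasDerivAt (fun t => l ⬝ᵥ (L t *ᵥ r t))
      (s' * (l ⬝ᵥ r x) + s x * (l ⬝ᵥ r')) x := by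
    refine (hs.fun_mul (hr.const_dotProduct l)).congr_of_eventuallyEq ?_
    filter_upwards [heig] with t ht
    rw [ht, dotProduct_smul, smul_eq_mul]
  linarith [hscaled.unique hpair]

theorem of_mul_mulVec (φ : m → ℝ) (A : Matrix m n ℝ) (v : n → ℝ) :
    Matrix.of (fun i j => φ i * A i j) *ᵥ v = φ * (A *ᵥ v) := by
  ext i
  simp only [mulVec, dotProduct, of_apply, Pi.mul_apply, Finset.mul_sum, mul_assoc]

end

theorem hasDerivAt_exp_potential_mul (ψ φ g x : ℝ) :
    HasDerivAt (fun t => Real.exp (ψ + t * φ) * g) (φ * (Real.exp (ψ + x * φ) * g)) x :=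
  (((hasDerivAt_mul_const φ).const_add ψ).exp.mul_const g).congr_deriv (by ring)

theorem pressure_derivative_is_gibbs_average_general
    {S : Type*} [Fintype S]
    (G : S → S → ℝ)
    (ψ φ : S → ℝ)
    (L : ℝ → Matrix S S ℝ)
    (hLdef : ∀ t w' w, L t w' w = Real.exp (ψ w' + t * φ w') * G w' w)
    (s : ℝ → ℝ) (r : ℝ → S → ℝ)
    (hs : DifferentiableAt ℝ s 0) (hr : DifferentiableAt ℝ r 0)
    (hs0 : 0 < s 0)
    (heig : ∀ᶠ t in nhds (0 : ℝ), (L t).mulVec (r t) = s t • r t)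
    (l : S → ℝ) (hleft : Matrix.vecMul l (L 0) = s 0 • l)
    (hnorm : ∑ w, l w * r 0 w = 1) :
    deriv (fun t => Real.log (s t)) 0 = ∑ w, φ w * (l w * r 0 w) := by
  have hL : ∀ i j, HasDerivAt (fun t => L t i j) (Matrix.of (fun i j => φ i * L 0 i j) i j) 0 := by
    intro i j
    simp only [hLdef, of_apply]
    exact hasDerivAt_exp_potential_mul _ _ _ _
  have hperturb := eigenvalue_deriv_mul_dotProduct hL hr.hasDerivAt hs.hasDerivAt heig hleft
  rw [of_mul_mulVec, heig.self_of_nhds] at hperturb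
  have hs' : deriv s 0 = s 0 * ∑ w, φ w * (l w * r 0 w) := by
    rw [← mul_one (deriv s 0), ← hnorm]
    refine hperturb.trans ?_
    simp only [dotProduct, Pi.mul_apply, Pi.smul_apply, smul_eq_mul, Finset.mul_sum]
    exact Finset.sum_congr rfl fun w _ => by ring
  rw [(hs.hasDerivAt.log hs0.ne').deriv, hs']
  field_simp

/-- **The topological pressure is a generating function:**
`∂/∂t log s(t) |_{t=0} = μ_ψ(φ) = ∑_w φ w * l w * r 0 w`, where `s t` is the
leading eigenvalue of the RPF matrix of the perturbed potential `ψ + t·φ`. -/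
theorem pressure_derivative_is_gibbs_average
    {S : Type*} [Fintype S] [Nonempty S] [DecidableEq S]
    (G : S → S → ℝ) (hG : ∀ w' w, G w' w = 0 ∨ G w' w = 1)
    (ψ φ : S → ℝ)
    (L : ℝ → Matrix S S ℝ)
    (hLdef : ∀ t w' w, L t w' w = Real.exp (ψ w' + t * φ w') * G w' w)
    (s : ℝ → ℝ) (r : ℝ → S → ℝ)
    (hs : DifferentiableAt ℝ s 0) (hr : DifferentiableAt ℝ r 0)
    (hs0 : 0 < s 0)
    (heig : ∀ᶠ t in nhds (0 : ℝ), (L t).mulVec (r t) = s t • r t)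
    (l : S → ℝ) (hleft : Matrix.vecMul l (L 0) = s 0 • l)
    (hnorm : ∑ w, l w * r 0 w = 1) :
    deriv (fun t => Real.log (s t)) 0 = ∑ w, φ w * (l w * r 0 w) :=
  pressure_derivative_is_gibbs_average_general G ψ φ L hLdef s r hs hr hs0 heig l hleft hnorm
end

section
/- Let S be a finite nonempty set, G : S × S → ℝ a grammar taking values in {0,1}, a, b : S → ℝ, and θ ∈ [0,1]; set c(w) = (1−θ)·a(w) + θ·b(w). For a potential ψ let L(ψ) be the matrix with entries e^{ψ(w')}·G(w',w). Suppose s_a, s_b, s_c > 0 and r_a, r_b, r_c are vectors with all entries strictly positive such that L(a)·r_a = s_a·r_a, L(b)·r_b = s_b·r_b, and L(c)·r_c = s_c·r_c. Then s_c ≤ s_a^{1−θ} · s_b^{θ}; equivalently, log s_c ≤ (1−θ)·log s_a + θ·log s_b. -/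
/-!
Entrywise, `L(c)` is the weighted geometric mean `L(a) ^ (1 - θ) * L(b) ^ θ`, because
`G ^ (1 - θ) * G ^ θ = G` for `G ≥ 0`. Hölder's inequality, row by row, then makes
`v = r_a ^ (1 - θ) * r_b ^ θ` subinvariant: `L(c) v ≤ s_a ^ (1 - θ) * s_b ^ θ • v`.
Comparing `v` with the positive eigenvector `r_c` at an index minimising `v / r_c`
(the Collatz–Wielandt argument) gives `s_c ≤ s_a ^ (1 - θ) * s_b ^ θ`.
-/

open Finset Matrix

theorem Real.sum_rpow_one_sub_mul_rpow_le {ι : Type*} (s : Finset ι) {x y : ι → ℝ}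
    (hx : ∀ i ∈ s, 0 ≤ x i) (hy : ∀ i ∈ s, 0 ≤ y i) {θ : ℝ} (hθ0 : 0 ≤ θ) (hθ1 : θ ≤ 1) :
    ∑ i ∈ s, x i ^ (1 - θ) * y i ^ θ ≤ (∑ i ∈ s, x i) ^ (1 - θ) * (∑ i ∈ s, y i) ^ θ := by
  obtain rfl | hθ0 := hθ0.eq_or_lt
  · simp
  obtain rfl | hθ1 := hθ1.eq_or_lt
  · simp
  have hconj : (1 - θ)⁻¹.HolderConjugate θ⁻¹ :=
    Real.holderConjugate_iff.2 ⟨one_lt_inv₀ (by linarith) |>.2 (by linarith), by simp⟩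
  have hpow : ∀ {t : ℝ}, t ≠ 0 → ∀ {z : ι → ℝ}, (∀ i ∈ s, 0 ≤ z i) →
      ∑ i ∈ s, (z i ^ t) ^ t⁻¹ = ∑ i ∈ s, z i := fun ht _ hz =>
    sum_congr rfl fun i hi => Real.rpow_rpow_inv (hz i hi) ht
  have holder := Real.inner_le_Lp_mul_Lq_of_nonneg s hconj
    (fun i hi => Real.rpow_nonneg (hx i hi) (1 - θ)) (fun i hi => Real.rpow_nonneg (hy i hi) θ)
  rwa [hpow (by linarith) hx, hpow hθ0.ne' hy, one_div, one_div, inv_inv, inv_inv] at holder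

theorem Matrix.mulVec_le_mulVec_of_nonneg {S : Type*} [Fintype S] {M : Matrix S S ℝ}
    (hM : ∀ i j, 0 ≤ M i j) {v w : S → ℝ} (hvw : v ≤ w) : M *ᵥ v ≤ M *ᵥ w := fun i =>
  sum_le_sum fun j _ => mul_le_mul_of_nonneg_left (hvw j) (hM i j)

theorem Matrix.eigenvalue_le_of_mulVec_le_smul {S : Type*} [Fintype S] [Nonempty S]
    {M : Matrix S S ℝ} (hM : ∀ i j, 0 ≤ M i j) {s μ : ℝ} {r v : S → ℝ}
    (hr : ∀ i, 0 < r i) (hv : ∀ i, 0 < v i) (hr_eig : M *ᵥ r = s • r) (hv_le : M *ᵥ v ≤ μ • v) :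
    s ≤ μ := by
  obtain ⟨i₀, -, hi₀⟩ := exists_min_image univ (fun i => v i / r i) univ_nonempty
  set t := v i₀ / r i₀
  have htr : t • r ≤ v := fun i => (le_div_iff₀ (hr i)).1 (hi₀ i (mem_univ i))
  have hv₀ : v i₀ = t * r i₀ := (div_mul_cancel₀ _ (hr i₀).ne').symm
  have key : s * v i₀ ≤ μ * v i₀ := calc
    s * v i₀ = (M *ᵥ (t • r)) i₀ := by
      rw [mulVec_smul, hr_eig, hv₀]; simp only [Pi.smul_apply, smul_eq_mul]; ring
    _ ≤ (M *ᵥ v) i₀ := mulVec_le_mulVec_of_nonneg hM htr i₀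
    _ ≤ μ * v i₀ := hv_le i₀
  exact le_of_mul_le_mul_right key (hv i₀)

section

variable {S : Type*} [Fintype S] {θ : ℝ}

theorem Matrix.mulVec_rpow_mul_rpow_le {A B C : Matrix S S ℝ} (hA : ∀ i j, 0 ≤ A i j)
    (hB : ∀ i j, 0 ≤ B i j) (hC : ∀ i j, C i j = A i j ^ (1 - θ) * B i j ^ θ)
    (hθ0 : 0 ≤ θ) (hθ1 : θ ≤ 1) {x y : S → ℝ} (hx : 0 ≤ x) (hy : 0 ≤ y) :
    C *ᵥ (fun j => x j ^ (1 - θ) * y j ^ θ) ≤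
      fun i => (A *ᵥ x) i ^ (1 - θ) * (B *ᵥ y) i ^ θ := fun i => calc
  ∑ j, C i j * (x j ^ (1 - θ) * y j ^ θ)
      = ∑ j, (A i j * x j) ^ (1 - θ) * (B i j * y j) ^ θ := sum_congr rfl fun j _ => by
    rw [hC, Real.mul_rpow (hA i j) (hx j), Real.mul_rpow (hB i j) (hy j)]; ring
  _ ≤ (∑ j, A i j * x j) ^ (1 - θ) * (∑ j, B i j * y j) ^ θ :=
    Real.sum_rpow_one_sub_mul_rpow_le _ (fun j _ => mul_nonneg (hA i j) (hx j))
      (fun j _ => mul_nonneg (hB i j) (hy j)) hθ0 hθ1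

theorem Matrix.eigenvalue_le_rpow_mul_rpow [Nonempty S] {A B C : Matrix S S ℝ}
    (hA : ∀ i j, 0 ≤ A i j) (hB : ∀ i j, 0 ≤ B i j)
    (hC : ∀ i j, C i j = A i j ^ (1 - θ) * B i j ^ θ) (hθ0 : 0 ≤ θ) (hθ1 : θ ≤ 1)
    {sa sb sc : ℝ} (hsa : 0 ≤ sa) (hsb : 0 ≤ sb) {ra rb rc : S → ℝ}
    (hra : ∀ i, 0 < ra i) (hrb : ∀ i, 0 < rb i) (hrc : ∀ i, 0 < rc i)
    (heiga : A *ᵥ ra = sa • ra) (heigb : B *ᵥ rb = sb • rb) (heigc : C *ᵥ rc = sc • rc) :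
    sc ≤ sa ^ (1 - θ) * sb ^ θ := by
  have hCnonneg : ∀ i j, 0 ≤ C i j := fun i j =>
    hC i j ▸ mul_nonneg (Real.rpow_nonneg (hA i j) _) (Real.rpow_nonneg (hB i j) _)
  have hv : ∀ i, 0 < ra i ^ (1 - θ) * rb i ^ θ := fun i =>
    mul_pos (Real.rpow_pos_of_pos (hra i) _) (Real.rpow_pos_of_pos (hrb i) _)
  refine eigenvalue_le_of_mulVec_le_smul hCnonneg hrc hv heigc fun i => ?_
  have hrow :=
    mulVec_rpow_mul_rpow_le hA hB hC hθ0 hθ1 (fun i => (hra i).le) (fun i => (hrb i).le) i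
  rw [heiga, heigb] at hrow
  simp only [Pi.smul_apply, smul_eq_mul, Real.mul_rpow hsa (hra i).le,
    Real.mul_rpow hsb (hrb i).le] at hrow ⊢
  linarith

end

theorem pressure_log_convex_general
    {S : Type*} [Fintype S] [Nonempty S]
    (G : S → S → ℝ) (hG : ∀ w' w, G w' w = 0 ∨ G w' w = 1)
    (a b : S → ℝ) (θ : ℝ) (hθ0 : 0 ≤ θ) (hθ1 : θ ≤ 1)
    (c : S → ℝ) (hc : ∀ w, c w = (1 - θ) * a w + θ * b w)
    (La Lb Lc : Matrix S S ℝ)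
    (hLa : ∀ w' w, La w' w = Real.exp (a w') * G w' w)
    (hLb : ∀ w' w, Lb w' w = Real.exp (b w') * G w' w)
    (hLc : ∀ w' w, Lc w' w = Real.exp (c w') * G w' w)
    (sa sb sc : ℝ) (hsa : 0 < sa) (hsb : 0 < sb) (hsc : 0 < sc)
    (ra rb rc : S → ℝ)
    (hra : ∀ w, 0 < ra w) (hrb : ∀ w, 0 < rb w) (hrc : ∀ w, 0 < rc w)
    (heiga : La.mulVec ra = sa • ra) (heigb : Lb.mulVec rb = sb • rb)
    (heigc : Lc.mulVec rc = sc • rc) :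
    sc ≤ sa ^ (1 - θ) * sb ^ θ ∧
      Real.log sc ≤ (1 - θ) * Real.log sa + θ * Real.log sb := by
  have hG_nonneg : ∀ w' w, 0 ≤ G w' w := fun w' w => by rcases hG w' w with h | h <;> simp [h]
  have hLc_interp : ∀ w' w, Lc w' w = La w' w ^ (1 - θ) * Lb w' w ^ θ := fun w' w => by
    rw [hLc, hLa, hLb, Real.mul_rpow (Real.exp_pos _).le (hG_nonneg w' w),
      Real.mul_rpow (Real.exp_pos _).le (hG_nonneg w' w), mul_mul_mul_comm, ← Real.exp_mul,
      ← Real.exp_mul, ← Real.exp_add, ← Real.rpow_add' (hG_nonneg w' w) (by simp),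
      sub_add_cancel, Real.rpow_one, hc, mul_comm (a w'), mul_comm (b w')]
  have hle : sc ≤ sa ^ (1 - θ) * sb ^ θ := Matrix.eigenvalue_le_rpow_mul_rpow
    (fun i j => hLa i j ▸ mul_nonneg (Real.exp_pos _).le (hG_nonneg i j))
    (fun i j => hLb i j ▸ mul_nonneg (Real.exp_pos _).le (hG_nonneg i j)) hLc_interp hθ0 hθ1
    hsa.le hsb.le hra hrb hrc heiga heigb heigc
  refine ⟨hle, ?_⟩
  calc Real.log sc ≤ Real.log (sa ^ (1 - θ) * sb ^ θ) := Real.log_le_log hsc hle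
    _ = (1 - θ) * Real.log sa + θ * Real.log sb := by
      rw [Real.log_mul (by positivity) (by positivity), Real.log_rpow hsa, Real.log_rpow hsb]

/-- **Log-convexity of the topological pressure.**
For potentials `a`, `b` and `c = (1−θ)·a + θ·b` with `θ ∈ [0,1]`, if the RPF
matrices `L(a)`, `L(b)`, `L(c)` have positive eigenvalues `s_a`, `s_b`, `s_c`
with strictly positive right eigenvectors, then
`s_c ≤ s_a^(1−θ) * s_b^θ`, i.e. `log s_c ≤ (1−θ)·log s_a + θ·log s_b`. -/
theorem pressure_log_convex
    {S : Type*} [Fintype S] [Nonempty S] [DecidableEq S]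
    (G : S → S → ℝ) (hG : ∀ w' w, G w' w = 0 ∨ G w' w = 1)
    (a b : S → ℝ) (θ : ℝ) (hθ0 : 0 ≤ θ) (hθ1 : θ ≤ 1)
    (c : S → ℝ) (hc : ∀ w, c w = (1 - θ) * a w + θ * b w)
    (La Lb Lc : Matrix S S ℝ)
    (hLa : ∀ w' w, La w' w = Real.exp (a w') * G w' w)
    (hLb : ∀ w' w, Lb w' w = Real.exp (b w') * G w' w)
    (hLc : ∀ w' w, Lc w' w = Real.exp (c w') * G w' w)
    (sa sb sc : ℝ) (hsa : 0 < sa) (hsb : 0 < sb) (hsc : 0 < sc)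
    (ra rb rc : S → ℝ)
    (hra : ∀ w, 0 < ra w) (hrb : ∀ w, 0 < rb w) (hrc : ∀ w, 0 < rc w)
    (heiga : La.mulVec ra = sa • ra) (heigb : Lb.mulVec rb = sb • rb)
    (heigc : Lc.mulVec rc = sc • rc) :
    sc ≤ sa ^ (1 - θ) * sb ^ θ ∧
      Real.log sc ≤ (1 - θ) * Real.log sa + θ * Real.log sb :=
  pressure_log_convex_general G hG a b θ hθ0 hθ1 c hc La Lb Lc hLa hLb hLc sa sb sc hsa hsb hsc ra
    rb rc hra hrb hrc heiga heigb heigc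
end

section
/- Let λ₁, λ₂ ∈ ℝ, set A = e^{λ₁}, B = e^{λ₁+λ₂}, and s = (1 + B + √((1−B)² + 4A))/2. Let L be the 4×4 real matrix with rows (1,0,1,0), (A,0,A,0), (0,1,0,1), (0,B,0,B). Then: (i) s > 0 and (s−1)(s−B) = A; (ii) the vector r = (1, A, s−1, B(s−1)) satisfies L·r = s·r; (iii) the vector l = (s−B, 1, s−B, 1) satisfies lᵀ·L = s·lᵀ; (iv) every complex eigenvalue z of L with z ≠ s satisfies |z| < s; and (v) the vector μ = (1/(s²+A−B))·(s−B, A, A, B(s−1)) has strictly positive entries summing to 1, and μ_w is proportional to l_w·r_w. -/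
/-!
The characteristic polynomial of `L` is `z²(z² − (1 + B)z + B − A)`, whose nonzero roots are `s`
and `1 + B − s`. Since `√((1 − B)² + 4A) > |1 − B|`, we get `s > max 1 B` and `|1 + B − s| < s`.
The eigenvector equations and the normalisation of `μ` all reduce to the quadratic relation
`(s − 1)(s − B) = A`; in particular `l_w r_w = (s − B, A, A, B(s − 1))`, which sums to `s² + A − B`.
-/

open Matrix

def rpfMatrix {R : Type*} [Zero R] [One R] (A B : R) : Matrix (Fin 4) (Fin 4) R :=
  !![1, 0, 1, 0; A, 0, A, 0; 0, 1, 0, 1; 0, B, 0, B]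

theorem rpfMatrix_map {R S : Type*} [Zero R] [One R] [Zero S] [One S] {f : R → S}
    (h0 : f 0 = 0) (h1 : f 1 = 1) (A B : R) :
    (rpfMatrix A B).map f = rpfMatrix (f A) (f B) := by
  ext i j
  fin_cases i <;> fin_cases j <;> simp [rpfMatrix, h0, h1]

theorem eval_charpoly_rpfMatrix {R : Type*} [CommRing R] (A B z : R) :
    (rpfMatrix A B).charpoly.eval z = z ^ 2 * (z ^ 2 - (1 + B) * z + (B - A)) := by
  rw [Matrix.eval_charpoly, Matrix.det_succ_row_zero]
  simp [rpfMatrix, Fin.sum_univ_succ, Matrix.det_fin_three, Fin.succAbove]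
  ring

theorem mem_spectrum_rpfMatrix_iff {K : Type*} [Field K] (A B z : K) :
    z ∈ spectrum K (rpfMatrix A B) ↔ z = 0 ∨ z ^ 2 - (1 + B) * z + (B - A) = 0 := by
  rw [Matrix.mem_spectrum_iff_isRoot_charpoly, Polynomial.IsRoot.def, eval_charpoly_rpfMatrix,
    mul_eq_zero, pow_eq_zero_iff two_ne_zero]

section
variable {R : Type*} [CommRing R] {A B s : R}

theorem rpfMatrix_mulVec (h : (s - 1) * (s - B) = A) :
    rpfMatrix A B *ᵥ ![1, A, s - 1, B * (s - 1)] = s • ![1, A, s - 1, B * (s - 1)] := by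
  ext w
  fin_cases w <;> simp [rpfMatrix, mulVec, dotProduct, Fin.sum_univ_four]
  · ring
  · linear_combination -h
  · linear_combination -B * h

theorem vecMul_rpfMatrix (h : (s - 1) * (s - B) = A) :
    ![s - B, 1, s - B, 1] ᵥ* rpfMatrix A B = s • ![s - B, 1, s - B, 1] := by
  ext w
  fin_cases w <;> simp [rpfMatrix, vecMul, dotProduct, Fin.sum_univ_four] <;>
    linear_combination -h

theorem perron_left_mul_right (h : (s - 1) * (s - B) = A) :
    ![s - B, 1, s - B, 1] * ![1, A, s - 1, B * (s - 1)] = ![s - B, A, A, B * (s - 1)] := by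
  ext w
  fin_cases w <;> simp [mul_comm _ (s - 1), h]

theorem sum_perron_weights (h : (s - 1) * (s - B) = A) :
    ∑ w, ![s - B, A, A, B * (s - 1)] w = s ^ 2 + A - B := by
  rw [Fin.sum_univ_four]
  simp only [cons_val]
  linear_combination -h

end

theorem sum_one_div_sum_smul_eq_one {ι K : Type*} [Fintype ι] [Field K] {v : ι → K} (h : ∑ i, v i ≠ 0) :
    ∑ i, ((1 / ∑ j, v j) • v) i = 1 := by
  simp only [Pi.smul_apply, smul_eq_mul, ← Finset.mul_sum]
  field_simp

noncomputable def perronRoot (A B : ℝ) : ℝ :=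
  (1 + B + √((1 - B) ^ 2 + 4 * A)) / 2

section
variable {A : ℝ} (B : ℝ)

theorem perronRoot_sub_one_mul_sub (hA : 0 ≤ A) :
    (perronRoot A B - 1) * (perronRoot A B - B) = A := by
  have := Real.sq_sqrt (show 0 ≤ (1 - B) ^ 2 + 4 * A by positivity)
  unfold perronRoot
  linear_combination this / 4

theorem abs_one_sub_lt_sqrt (hA : 0 < A) : |1 - B| < √((1 - B) ^ 2 + 4 * A) := by
  rw [Real.lt_sqrt (abs_nonneg _), sq_abs]
  linarith

theorem one_lt_perronRoot (hA : 0 < A) : 1 < perronRoot A B := by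
  have := abs_lt.1 (abs_one_sub_lt_sqrt B hA)
  unfold perronRoot
  linarith

theorem lt_perronRoot (hA : 0 < A) : B < perronRoot A B := by
  have := abs_lt.1 (abs_one_sub_lt_sqrt B hA)
  unfold perronRoot
  linarith

theorem abs_one_add_sub_perronRoot_lt (hA : 0 < A) (hB : 0 < 1 + B) :
    |1 + B - perronRoot A B| < perronRoot A B := by
  have := (abs_nonneg _).trans_lt (abs_one_sub_lt_sqrt B hA)
  unfold perronRoot
  rw [abs_lt]
  constructor <;> linarith

end

theorem norm_lt_perronRoot_of_mem_spectrum {A B : ℝ} (hA : 0 < A) (hB : 0 < 1 + B) {z : ℂ}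
    (hz : z ∈ spectrum ℂ ((rpfMatrix A B).map Complex.ofReal)) (hzs : z ≠ perronRoot A B) :
    ‖z‖ < perronRoot A B := by
  rw [rpfMatrix_map Complex.ofReal_zero Complex.ofReal_one, mem_spectrum_rpfMatrix_iff] at hz
  rcases hz with rfl | hq
  · simpa using (zero_lt_one.trans (one_lt_perronRoot B hA))
  · have key : ((perronRoot A B - 1) * (perronRoot A B - B) : ℂ) = A := by
      exact_mod_cast perronRoot_sub_one_mul_sub B hA.le
    have hfac : (z - perronRoot A B) * (z - (1 + B - perronRoot A B : ℝ)) = 0 := by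
      push_cast
      linear_combination hq - key
    rcases mul_eq_zero.1 hfac with h | h
    · exact absurd (sub_eq_zero.1 h) hzs
    · rw [sub_eq_zero.1 h, Complex.norm_real, Real.norm_eq_abs]
      exact abs_one_add_sub_perronRoot_lt B hA hB

/-- **Closed-form RPF analysis for one neuron with a range-2 potential**
`ψ(ω) = λ₁·ω₀(0) + λ₂·ω₀(0)·ω₀(1)`: with `A = e^{λ₁}`, `B = e^{λ₁+λ₂}` and
`s = (1 + B + √((1−B)² + 4A))/2`, the eigenvalue equation `(s−1)(s−B) = A`
holds, `r = (1, A, s−1, B(s−1))` and `l = (s−B, 1, s−B, 1)` are right and left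
eigenvectors of the RPF matrix for `s`, every other complex eigenvalue has
modulus `< s`, and `μ = (s−B, A, A, B(s−1))/(s²+A−B)` is the Gibbs (invariant)
probability vector, proportional to `(l_w·r_w)_w`. -/
theorem one_neuron_range_two_closed_form
    (lam1 lam2 : ℝ)
    (A B s : ℝ)
    (hA : A = Real.exp lam1) (hB : B = Real.exp (lam1 + lam2))
    (hs : s = (1 + B + Real.sqrt ((1 - B) ^ 2 + 4 * A)) / 2)
    (L : Matrix (Fin 4) (Fin 4) ℝ)
    (hL : L = !![1, 0, 1, 0; A, 0, A, 0; 0, 1, 0, 1; 0, B, 0, B])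
    (r l μ : Fin 4 → ℝ)
    (hr : r = ![1, A, s - 1, B * (s - 1)])
    (hl : l = ![s - B, 1, s - B, 1])
    (hμ : μ = (1 / (s ^ 2 + A - B)) • ![s - B, A, A, B * (s - 1)]) :
    (0 < s ∧ (s - 1) * (s - B) = A) ∧
      L.mulVec r = s • r ∧
      Matrix.vecMul l L = s • l ∧
      (∀ z ∈ spectrum ℂ (L.map (Complex.ofReal)), z ≠ (s : ℂ) →
        ‖z‖ < s) ∧
      ((∀ w, 0 < μ w) ∧ ∑ w, μ w = 1 ∧
        ∃ c : ℝ, 0 < c ∧ ∀ w, μ w = c * (l w * r w)) := by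
  have hA0 : 0 < A := hA ▸ Real.exp_pos _
  have hB0 : 0 < B := hB ▸ Real.exp_pos _
  obtain rfl : s = perronRoot A B := hs
  have key := perronRoot_sub_one_mul_sub B hA0.le
  have hs1 := one_lt_perronRoot B hA0
  have hweights : ∀ w, 0 < ![perronRoot A B - B, A, A, B * (perronRoot A B - 1)] w := by
    intro w
    fin_cases w
    exacts [sub_pos.2 (lt_perronRoot B hA0), hA0, hA0, mul_pos hB0 (sub_pos.2 hs1)]
  have hsum := sum_perron_weights key
  have hden : 0 < perronRoot A B ^ 2 + A - B :=
    hsum ▸ Finset.sum_pos (fun w _ => hweights w) Finset.univ_nonempty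
  have hc := one_div_pos.2 hden
  subst hL hr hl hμ
  refine ⟨⟨by linarith, key⟩, rpfMatrix_mulVec key, vecMul_rpfMatrix key,
    fun z hz hzs => norm_lt_perronRoot_of_mem_spectrum hA0 (by linarith) hz hzs,
    fun w => mul_pos hc (hweights w), ?_, 1 / (perronRoot A B ^ 2 + A - B), hc, fun w => ?_⟩
  · rw [← hsum]
    exact sum_one_div_sum_smul_eq_one (hsum.trans_ne hden.ne')
  · rw [← perron_left_mul_right key]
    rfl
end
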